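/- arXiv:1103.3683 — 11 statements merged into one kernel-verified Lean document; each statement's English description precedes it below -/
import Mathlib

section
/- Fix h > 0 and define u_*(h,ε) := ε² · (e^{(1+ε)h} − 1 − εh) / (1 + εh − e^{−(1+ε)h}) for ε > 0. Then u_*(h,ε) is strictly increasing in ε on (0,∞). -/
/-!
Write `u ε = ε A(ε) / (D(ε) / ε)` with `A(ε) = e^{(1+ε)h} - 1 - εh` and
`D(ε) = 1 + εh - e^{-(1+ε)h}`. Since `A = (exp - id)((1+ε)h) + h - 1` and `exp - id` increases on
`[0, ∞)`, the numerator is a product of two positive increasing factors. The denominator `D` is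
concave with `D(0) = 1 - e^{-h} > 0`, so its secant slopes through the origin, `D(ε) / ε`, strictly
decrease.
-/

open Real Set

section SecantThroughZero

variable {𝕜 : Type*} [Field 𝕜] [LinearOrder 𝕜] [IsStrictOrderedRing 𝕜] {f : 𝕜 → 𝕜}

theorem ConcaveOn.strictAntiOn_div_self_of_pos_at_zero (hf : ConcaveOn 𝕜 (Ici 0) f)
    (h0 : 0 < f 0) : StrictAntiOn (fun x => f x / x) (Ioi 0) := by
  intro x hx y hy hxy
  have hslope : (f 0 - f x) / x ≤ (f 0 - f y) / y := by
    simpa only [Pi.neg_apply, sub_zero, neg_sub_neg] using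
      hf.neg.secant_mono self_mem_Ici (le_of_lt hx) (le_of_lt hy) hx.ne' hy.ne' hxy.le
  have hconst : f 0 / y < f 0 / x := div_lt_div_of_pos_left h0 hx hxy
  calc f y / y = f 0 / y - (f 0 - f y) / y := by ring
    _ < f 0 / x - (f 0 - f x) / x := by linarith
    _ = f x / x := by ring

end SecantThroughZero

theorem Real.strictMonoOn_exp_sub_self : StrictMonoOn (fun x => exp x - x) (Ici 0) := by
  intro x hx y _ hxy
  have hgap : y - x < exp (y - x) - 1 := by linarith [add_one_lt_exp (sub_pos.2 hxy).ne']
  have hsplit : exp y - exp x = exp x * (exp (y - x) - 1) := by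
    rw [mul_sub, ← exp_add, add_sub_cancel, mul_one]
  have : y - x < exp x * (exp (y - x) - 1) :=
    hgap.trans_le (le_mul_of_one_le_left (by linarith) (one_le_exp hx))
  show exp x - x < exp y - y
  linarith

theorem concaveOn_one_add_mul_sub_exp (h : ℝ) :
    ConcaveOn ℝ univ (fun t => 1 + t * h - exp (-(1 + t) * h)) := by
  refine ⟨convex_univ, fun x _ y _ a b ha hb hab => ?_⟩
  have hexp := convexOn_exp.2 (mem_univ (-(1 + x) * h)) (mem_univ (-(1 + y) * h)) ha hb hab
  simp only [smul_eq_mul] at hexp ⊢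
  have harg : a * (-(1 + x) * h) + b * (-(1 + y) * h) = -(1 + (a * x + b * y)) * h := by
    linear_combination (-h) * hab
  rw [harg] at hexp
  linear_combination hexp + hab

theorem stmt_3 (h : ℝ) (hh : 0 < h) (u : ℝ → ℝ)
    (hu : ∀ ε : ℝ, u ε =
      ε ^ 2 * (Real.exp ((1 + ε) * h) - 1 - ε * h) /
        (1 + ε * h - Real.exp (-(1 + ε) * h))) :
    StrictMonoOn u (Set.Ioi 0) := by
  set A : ℝ → ℝ := fun ε => exp ((1 + ε) * h) - 1 - ε * h
  set D : ℝ → ℝ := fun ε => 1 + ε * h - exp (-(1 + ε) * h)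
  have hA_pos : ∀ ε, 0 < A ε := fun ε => by linarith [add_one_le_exp ((1 + ε) * h)]
  have hA_mono : StrictMonoOn A (Ioi 0) := fun x hx y hy hxy => by
    rw [mem_Ioi] at hx hy
    have := strictMonoOn_exp_sub_self (a := (1 + x) * h) (b := (1 + y) * h)
      (by rw [mem_Ici]; positivity) (by rw [mem_Ici]; positivity) (by gcongr)
    simp only [A]; linarith
  have hD_pos : ∀ ε, 0 ≤ ε → 0 < D ε := fun ε hε => by
    have : exp (-(1 + ε) * h) < 1 := exp_lt_one_iff.2 (by nlinarith)
    simp only [D]; nlinarith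
  have hD_div : StrictAntiOn (fun ε => D ε / ε) (Ioi 0) :=
    ((concaveOn_one_add_mul_sub_exp h).subset (subset_univ _) (convex_Ici 0)
      ).strictAntiOn_div_self_of_pos_at_zero (hD_pos 0 le_rfl)
  have hu_split : ∀ ε, u ε = ε * A ε / (D ε / ε) := fun ε => by
    rw [hu, div_div_eq_mul_div]; ring
  intro x hx y hy hxy
  rw [hu_split, hu_split]
  exact div_lt_div₀ (mul_lt_mul'' hxy (hA_mono hx hy hxy) (le_of_lt hx) (hA_pos x).le)
    (hD_div hx hy hxy).le (mul_pos hy (hA_pos y)).le (div_pos (hD_pos y (le_of_lt hy)) hy)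
end

section
/- Fix h > 0. For ε > 0 let u_*(h,ε) := ε²(e^{(1+ε)h} − 1 − εh)/(1 + εh − e^{−(1+ε)h}) and δ(ε) := (u_*(h,ε) − ε)·(e^{(1+ε)h}(1 + εh) − 1)/(ε² e^{2(1+ε)h}). Then δ is strictly increasing on (0,∞), δ(ε) → −∞ as ε → 0⁺, and δ(ε) → 1 as ε → ∞. -/
/-!
Clearing denominators, `δ(ε) = 1 - A (1 + t) - A (1 - A) / ε` with `t = (1 + ε) h` and
`A = e^{-t}`. Its derivative is `A (h t ε² + h (1 - 2A) ε + 1 - A) / ε²`, and the numerator is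
positive because `A (1 + t) < 1` (i.e. `1 + t < e^t`) and `t > h ε`. As `ε → 0⁺` the term
`A (1 - A) / ε` blows up since `A (1 - A) → e^{-h} (1 - e^{-h}) > 0`; as `ε → ∞`, both
`A (1 + t)` and `A (1 - A) / ε` tend to `0`.
-/

open Filter Real Topology

noncomputable def reducedDelta (h ε : ℝ) : ℝ :=
  1 - exp (-((1 + ε) * h)) * (1 + (1 + ε) * h)
    - exp (-((1 + ε) * h)) * (1 - exp (-((1 + ε) * h))) / ε

theorem delta_eq_reducedDelta {h ε : ℝ} (hε : ε ≠ 0)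
    (hD : 1 + ε * h - exp (-(1 + ε) * h) ≠ 0) :
    (ε ^ 2 * (exp ((1 + ε) * h) - 1 - ε * h) / (1 + ε * h - exp (-(1 + ε) * h)) - ε) *
        (exp ((1 + ε) * h) * (1 + ε * h) - 1) / (ε ^ 2 * exp (2 * (1 + ε) * h)) =
      reducedDelta h ε := by
  have hE : exp ((1 + ε) * h) ≠ 0 := (exp_pos _).ne'
  have hA : exp (-(1 + ε) * h) = (exp ((1 + ε) * h))⁻¹ := by rw [← exp_neg, neg_mul]
  have hE2 : exp (2 * (1 + ε) * h) = exp ((1 + ε) * h) ^ 2 := by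
    rw [← exp_nat_mul]; ring_nf
  rw [reducedDelta, neg_mul, ← neg_mul, hA, hE2]
  rw [hA] at hD
  set E := exp ((1 + ε) * h)
  have hD' : E * (1 + ε * h) - 1 ≠ 0 := by
    contrapose! hD; field_simp; linarith
  field_simp
  ring

theorem hasDerivAt_reducedDelta (h : ℝ) {ε : ℝ} (hε : ε ≠ 0) :
    HasDerivAt (reducedDelta h)
      (exp (-((1 + ε) * h)) * ((1 + ε) * h ^ 2 * ε ^ 2 + h * (1 - 2 * exp (-((1 + ε) * h))) * ε
        + (1 - exp (-((1 + ε) * h)))) / ε ^ 2) ε := by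
  have ht : HasDerivAt (fun x : ℝ => (1 + x) * h) h ε := by
    simpa using ((hasDerivAt_id ε).const_add 1).mul_const h
  have hA : HasDerivAt (fun x : ℝ => exp (-((1 + x) * h))) (exp (-((1 + ε) * h)) * -h) ε :=
    (hasDerivAt_exp _).comp ε ht.neg
  refine (((hA.fun_mul (ht.const_add 1)).const_sub 1).fun_sub
    ((hA.fun_mul (hA.const_sub 1)).fun_div (hasDerivAt_id' ε) hε)).congr_deriv ?_
  field_simp
  ring

theorem exp_neg_mul_one_add_lt_one {x : ℝ} (hx : x ≠ 0) : exp (-x) * (1 + x) < 1 := by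
  rw [exp_neg, inv_mul_lt_one₀ (exp_pos x), add_comm]
  exact add_one_lt_exp hx

theorem reducedDelta_deriv_numerator_pos {h ε A : ℝ} (hh : 0 < h) (hε : 0 < ε) (hA : 0 < A)
    (hAt : A * (1 + (1 + ε) * h) < 1) :
    0 < (1 + ε) * h ^ 2 * ε ^ 2 + h * (1 - 2 * A) * ε + (1 - A) := by
  have hmain : 0 < (1 - A * (1 + (1 + ε) * h)) * (1 + h * ε) :=
    mul_pos (sub_pos.2 hAt) (by positivity)
  have hrest : 0 < A * (1 + ε) * h * h * ε + A * h + (1 + ε) * h ^ 2 * ε ^ 2 := by positivity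
  linarith

theorem strictMonoOn_reducedDelta {h : ℝ} (hh : 0 < h) :
    StrictMonoOn (reducedDelta h) (Set.Ioi 0) := by
  refine strictMonoOn_of_deriv_pos (convex_Ioi 0) (fun ε hε => ?_) (fun ε hε => ?_)
  · exact (hasDerivAt_reducedDelta h (ne_of_gt hε)).continuousAt.continuousWithinAt
  rw [interior_Ioi, Set.mem_Ioi] at hε
  rw [(hasDerivAt_reducedDelta h hε.ne').deriv]
  have ht : (1 + ε) * h ≠ 0 := by positivity
  have hN := reducedDelta_deriv_numerator_pos hh hε (exp_pos _) (exp_neg_mul_one_add_lt_one ht)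
  exact div_pos (mul_pos (exp_pos _) hN) (by positivity)

theorem tendsto_reducedDelta_nhdsGT_zero {h : ℝ} (hh : 0 < h) :
    Tendsto (reducedDelta h) (𝓝[>] 0) atBot := by
  have hcont : Continuous fun ε : ℝ => exp (-((1 + ε) * h)) * (1 + (1 + ε) * h) := by fun_prop
  have hcont' : Continuous fun ε : ℝ => exp (-((1 + ε) * h)) * (1 - exp (-((1 + ε) * h))) := by
    fun_prop
  have hpos : 0 < exp (-h) * (1 - exp (-h)) :=
    mul_pos (exp_pos _) (sub_pos.2 (exp_lt_one_iff.2 (neg_lt_zero.2 hh)))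
  have hconv := (tendsto_const_nhds (x := (1 : ℝ))).sub (hcont.tendsto 0) |>.mono_left
    (nhdsWithin_le_nhds (s := Set.Ioi 0))
  have hlim := (hcont'.tendsto' 0 (exp (-h) * (1 - exp (-h))) (by norm_num)).mono_left
    (nhdsWithin_le_nhds (s := Set.Ioi 0))
  have hblowup := tendsto_neg_atTop_atBot.comp (hlim.pos_mul_atTop hpos tendsto_inv_nhdsGT_zero)
  exact (hconv.add_atBot hblowup).congr fun ε => by
    simp only [Function.comp_apply, reducedDelta]
    ring

theorem tendsto_reducedDelta_atTop {h : ℝ} (hh : 0 < h) :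
    Tendsto (reducedDelta h) atTop (𝓝 1) := by
  have ht : Tendsto (fun ε : ℝ => (1 + ε) * h) atTop atTop :=
    (tendsto_atTop_add_const_left _ 1 tendsto_id).atTop_mul_const hh
  have hA : Tendsto (fun ε : ℝ => exp (-((1 + ε) * h))) atTop (𝓝 0) :=
    tendsto_exp_neg_atTop_nhds_zero.comp ht
  have hAt : Tendsto (fun ε : ℝ => exp (-((1 + ε) * h)) * (1 + (1 + ε) * h)) atTop (𝓝 0) := by
    have hlim := (tendsto_exp_neg_atTop_nhds_zero.add
      (tendsto_pow_mul_exp_neg_atTop_nhds_zero 1)).comp ht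
    rw [add_zero] at hlim
    refine hlim.congr fun ε => ?_
    simp only [Function.comp_apply, pow_one]
    ring
  have hlim := ((tendsto_const_nhds (x := (1 : ℝ))).sub hAt).sub
    ((hA.mul ((tendsto_const_nhds (x := (1 : ℝ))).sub hA)).div_atTop tendsto_id)
  rwa [sub_zero, sub_zero] at hlim

theorem stmt_4 (h : ℝ) (hh : 0 < h) (u δ : ℝ → ℝ)
    (hu : ∀ ε : ℝ, u ε =
      ε ^ 2 * (Real.exp ((1 + ε) * h) - 1 - ε * h) /
        (1 + ε * h - Real.exp (-(1 + ε) * h)))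
    (hδ : ∀ ε : ℝ, δ ε =
      (u ε - ε) * (Real.exp ((1 + ε) * h) * (1 + ε * h) - 1) /
        (ε ^ 2 * Real.exp (2 * (1 + ε) * h))) :
    StrictMonoOn δ (Set.Ioi 0) ∧
    Filter.Tendsto δ (nhdsWithin 0 (Set.Ioi 0)) Filter.atBot ∧
    Filter.Tendsto δ Filter.atTop (nhds 1) := by
  have hδ_eq : Set.EqOn δ (reducedDelta h) (Set.Ioi 0) := fun ε (hε : 0 < ε) => by
    have hA : exp (-(1 + ε) * h) < 1 := exp_lt_one_iff.2 (by nlinarith)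
    rw [hδ, hu]
    exact delta_eq_reducedDelta hε.ne' (sub_pos.2 (by linarith [mul_pos hε hh])).ne'
  refine ⟨fun a ha b hb hab => ?_, ?_, ?_⟩
  · rw [hδ_eq ha, hδ_eq hb]
    exact strictMonoOn_reducedDelta hh ha hb hab
  · exact (tendsto_reducedDelta_nhdsGT_zero hh).congr' (eventuallyEq_nhdsWithin_of_eqOn hδ_eq).symm
  · exact (tendsto_reducedDelta_atTop hh).congr'
      (eventuallyEq_of_mem (Ioi_mem_atTop 0) hδ_eq).symm
end

section
/- Fix h > 0 and set u_*(h,ε) := ε²(e^{(1+ε)h} − 1 − εh)/(1 + εh − e^{−(1+ε)h}) for ε > 0. There is a unique s > 0 such that u_*(h, s²) = s². -/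
/-!
Clearing the denominator, which is positive for `ε > 0`, turns `u_*(h, ε) = ε` into `G ε = 0`,
where `G = uStarResidual h` is `G x = x e^{(1+x)h} + e^{-(1+x)h} - h x² - (1+h) x - 1`. Since
`G'' x = h (2 + x h) e^{(1+x)h} + h² e^{-(1+x)h} - 2h > 0` for `x ≥ 0`, `G` is strictly convex on
`[0, ∞)`; together with `G 0 = e^{-h} - 1 < 0` this leaves room for at most one positive zero,
and `G (2 / h²) > 0`, from `e^t ≥ 1 + t + t²/2`, provides one. The solution is then `s = √ε`.
-/

open Real Set

section StrictConvexZero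

variable {f : ℝ → ℝ} {a : ℝ}

theorem StrictConvexOn.eq_of_apply_eq_zero {s : Set ℝ} (hf : StrictConvexOn ℝ s f) (ha : a ∈ s)
    (hfa : f a < 0) {x y : ℝ} (hx : x ∈ s) (hy : y ∈ s) (hax : a < x) (hay : a < y)
    (hfx : f x = 0) (hfy : f y = 0) : x = y := by
  have below_zero : ∀ {x y : ℝ}, y ∈ s → a < x → x < y → f y = 0 → f x < 0 := by
    intro x y hy hax hxy hfy
    have hx : x ∈ openSegment ℝ a y := by
      rw [openSegment_eq_Ioo (hax.trans hxy)]
      exact ⟨hax, hxy⟩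
    simpa [hfy, max_eq_right hfa.le] using hf.lt_on_openSegment ha hy (hax.trans hxy).ne hx
  rcases lt_trichotomy x y with hxy | rfl | hxy
  · exact absurd hfx (below_zero hy hax hxy hfy).ne
  · rfl
  · exact absurd hfy (below_zero hx hay hxy hfx).ne

theorem StrictConvexOn.existsUnique_zero_Ioi (hf : StrictConvexOn ℝ (Ici a) f) {b : ℝ}
    (hab : a ≤ b) (hcont : ContinuousOn f (Icc a b)) (hfa : f a < 0) (hfb : 0 ≤ f b) :
    ∃! x, a < x ∧ f x = 0 := by
  obtain ⟨c, ⟨hac, -⟩, hfc⟩ := intermediate_value_Icc hab hcont ⟨hfa.le, hfb⟩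
  have hac : a < c := hac.lt_of_ne (by rintro rfl; exact hfa.ne hfc)
  refine ⟨c, ⟨hac, hfc⟩, fun x ⟨hax, hfx⟩ => ?_⟩
  exact hf.eq_of_apply_eq_zero self_mem_Ici hfa hax.le hac.le hax hac hfx hfc

end StrictConvexZero

theorem existsUnique_pos_sq_of_existsUnique_pos {p : ℝ → Prop} (hp : ∃! c, 0 < c ∧ p c) :
    ∃! s : ℝ, 0 < s ∧ p (s ^ 2) := by
  obtain ⟨c, ⟨hc, hpc⟩, huniq⟩ := hp
  refine ⟨√c, ⟨sqrt_pos.2 hc, by rwa [sq_sqrt hc.le]⟩, fun s ⟨hs, hps⟩ => ?_⟩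
  rw [← huniq _ ⟨by positivity, hps⟩, sqrt_sq hs.le]

noncomputable def uStar (h ε : ℝ) : ℝ :=
  ε ^ 2 * (exp ((1 + ε) * h) - 1 - ε * h) / (1 + ε * h - exp (-(1 + ε) * h))

noncomputable def uStarResidual (h x : ℝ) : ℝ :=
  x * exp ((1 + x) * h) + exp (-(1 + x) * h) - h * x ^ 2 - (1 + h) * x - 1

theorem continuous_uStarResidual (h : ℝ) : Continuous (uStarResidual h) := by
  unfold uStarResidual
  fun_prop

theorem hasDerivAt_exp_one_add_mul (c x : ℝ) :
    HasDerivAt (fun y ↦ exp ((1 + y) * c)) (c * exp ((1 + x) * c)) x := by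
  simpa [mul_comm] using (((hasDerivAt_id' x).const_add 1).mul_const c).exp

theorem hasDerivAt_exp_neg_one_add_mul (c x : ℝ) :
    HasDerivAt (fun y ↦ exp (-(1 + y) * c)) (-c * exp (-(1 + x) * c)) x := by
  simpa [mul_comm] using (((hasDerivAt_id' x).const_add 1).neg.mul_const c).exp

theorem hasDerivAt_uStarResidual (h x : ℝ) :
    HasDerivAt (uStarResidual h) ((1 + x * h) * exp ((1 + x) * h)
      - h * exp (-(1 + x) * h) - 2 * h * x - (1 + h)) x := by
  have := ((((hasDerivAt_id' x).mul (hasDerivAt_exp_one_add_mul h x)).add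
    (hasDerivAt_exp_neg_one_add_mul h x)).sub ((hasDerivAt_pow 2 x).const_mul h)).sub
    ((hasDerivAt_id' x).const_mul (1 + h)) |>.sub_const 1
  exact this.congr_deriv (by push_cast; ring)

theorem hasDerivAt_deriv_uStarResidual (h x : ℝ) :
    HasDerivAt (fun y ↦ (1 + y * h) * exp ((1 + y) * h)
      - h * exp (-(1 + y) * h) - 2 * h * y - (1 + h))
      (h * (2 + x * h) * exp ((1 + x) * h) + h ^ 2 * exp (-(1 + x) * h) - 2 * h) x := by
  have := (((((hasDerivAt_id' x).mul_const h).const_add 1).mul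
    (hasDerivAt_exp_one_add_mul h x)).sub ((hasDerivAt_exp_neg_one_add_mul h x).const_mul h)).sub
    ((hasDerivAt_id' x).const_mul (2 * h)) |>.sub_const (1 + h)
  exact this.congr_deriv (by ring)

section Residual

variable {h : ℝ}

theorem uStar_eq_self_iff (hh : 0 < h) {ε : ℝ} (hε : 0 < ε) :
    uStar h ε = ε ↔ uStarResidual h ε = 0 := by
  have hexp : exp (-(1 + ε) * h) < 1 := exp_lt_one_iff.2 (by nlinarith)
  have hden : 0 < 1 + ε * h - exp (-(1 + ε) * h) := by nlinarith [mul_pos hε hh]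
  rw [uStar, div_eq_iff hden.ne']
  constructor
  · intro H
    have : ε * uStarResidual h ε = 0 := by rw [uStarResidual]; linear_combination H
    exact (mul_eq_zero.1 this).resolve_left hε.ne'
  · intro H
    rw [uStarResidual] at H
    linear_combination ε * H

theorem uStarResidual_zero_neg (hh : 0 < h) : uStarResidual h 0 < 0 := by
  have : exp (-(1 + 0) * h) < 1 := exp_lt_one_iff.2 (by linarith)
  simp only [uStarResidual]
  linarith

theorem sub_one_lt_uStarResidual (hh : 0 ≤ h) {x : ℝ} (hx : 0 ≤ x) :
    x * ((1 + x) * h) ^ 2 / 2 - 1 < uStarResidual h x := by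
  have hquad := quadratic_le_exp_of_nonneg (by positivity : 0 ≤ (1 + x) * h)
  have := mul_le_mul_of_nonneg_left hquad hx
  have := exp_pos (-(1 + x) * h)
  rw [uStarResidual]
  nlinarith

theorem uStarResidual_pos (hh : 0 < h) : 0 < uStarResidual h (2 / h ^ 2) := by
  have hx : 0 < 2 / h ^ 2 := by positivity
  calc 0 < (1 + 2 / h ^ 2) ^ 2 - 1 := by nlinarith
    _ = 2 / h ^ 2 * ((1 + 2 / h ^ 2) * h) ^ 2 / 2 - 1 := by field_simp
    _ < uStarResidual h (2 / h ^ 2) := sub_one_lt_uStarResidual hh.le hx.le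

theorem strictConvexOn_uStarResidual (hh : 0 < h) :
    StrictConvexOn ℝ (Ici 0) (uStarResidual h) := by
  have hderiv : deriv (uStarResidual h) = fun y ↦ (1 + y * h) * exp ((1 + y) * h)
      - h * exp (-(1 + y) * h) - 2 * h * y - (1 + h) :=
    funext fun y ↦ (hasDerivAt_uStarResidual h y).deriv
  refine strictConvexOn_of_deriv2_pos' (convex_Ici 0) (continuous_uStarResidual h).continuousOn
    fun x (hx : 0 ≤ x) ↦ ?_
  rw [Function.iterate_succ_apply, Function.iterate_one, hderiv,
    (hasDerivAt_deriv_uStarResidual h x).deriv]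
  have h1 : 1 ≤ exp ((1 + x) * h) := one_le_exp (by positivity)
  have h2 : 2 ≤ (2 + x * h) * exp ((1 + x) * h) := by nlinarith [mul_nonneg hx hh.le]
  nlinarith [exp_pos (-(1 + x) * h), mul_pos hh hh]

end Residual

theorem stmt_5 (h : ℝ) (hh : 0 < h) (u : ℝ → ℝ)
    (hu : ∀ ε : ℝ, u ε =
      ε ^ 2 * (Real.exp ((1 + ε) * h) - 1 - ε * h) /
        (1 + ε * h - Real.exp (-(1 + ε) * h))) :
    ∃! s : ℝ, 0 < s ∧ u (s ^ 2) = s ^ 2 := by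
  obtain rfl : u = uStar h := funext hu
  apply existsUnique_pos_sq_of_existsUnique_pos (p := fun ε ↦ uStar h ε = ε)
  have hzero := (strictConvexOn_uStarResidual hh).existsUnique_zero_Ioi (by positivity)
    (continuous_uStarResidual h).continuousOn (uStarResidual_zero_neg hh)
    (uStarResidual_pos hh).le
  exact (existsUnique_congr fun ε ↦ and_congr_right (uStar_eq_self_iff hh)).2 hzero
end

section
/- Fix h > 0 and σ > 0 with u_*(h, σ²) > σ², where u_*(h,ε) := ε²(e^{(1+ε)h} − 1 − εh)/(1 + εh − e^{−(1+ε)h}). Then there is a unique ε̃ ∈ (0, σ²) with u_*(h, ε̃) = σ²; moreover u_*(h,ε) − σ² has the same sign as ε − ε̃ for all ε ∈ (0, σ²). -/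
open Real Set

/-!
With `N(ε) = e^{(1+ε)h} - 1 - εh` and `D(ε) = 1 + εh - e^{-(1+ε)h} > 0` for `ε ≥ 0`, the
difference `u_*(h, ε) - σ²` has the sign of `G(ε) = ε² N(ε) - σ² D(ε)`. On `[0, ∞)` both `ε²` and
`N` are nonnegative, nondecreasing and convex, so their product is convex, while `D` is concave;
hence `G` is convex. As `G(0) = -σ² D(0) < 0 < G(σ²)`, `G` has a root `ε̃ ∈ (0, σ²)`, and a convex
function that is negative at `0` is negative before and positive after any of its roots.
-/

section ConvexSign

variable {𝕜 : Type*} [Field 𝕜] [LinearOrder 𝕜] [IsStrictOrderedRing 𝕜] {s : Set 𝕜} {f : 𝕜 → 𝕜}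
  {a r x : 𝕜}

theorem ConvexOn.neg_of_lt_of_eq_zero (hf : ConvexOn 𝕜 s f) (has : a ∈ s) (hrs : r ∈ s)
    (ha : f a < 0) (hr : f r = 0) (hax : a ≤ x) (hxr : x < r) : f x < 0 := by
  rcases hax.eq_or_lt with rfl | hax
  · exact ha
  by_contra! hx
  have := hf.lt_right_of_left_lt has hrs
    (by rw [openSegment_eq_Ioo (hax.trans hxr)]; exact ⟨hax, hxr⟩) (ha.trans_le hx)
  linarith

theorem ConvexOn.pos_of_eq_zero_of_lt (hf : ConvexOn 𝕜 s f) (has : a ∈ s) (hxs : x ∈ s)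
    (ha : f a < 0) (hr : f r = 0) (har : a ≤ r) (hrx : r < x) : 0 < f x := by
  rcases har.eq_or_lt with rfl | har
  · exact absurd hr ha.ne
  exact hr ▸ hf.lt_right_of_left_lt has hxs
    (by rw [openSegment_eq_Ioo (har.trans hrx)]; exact ⟨har, hrx⟩) (hr ▸ ha)

theorem ConvexOn.neg_iff_and_pos_iff_of_eq_zero (hf : ConvexOn 𝕜 s f) (has : a ∈ s) (hrs : r ∈ s)
    (hxs : x ∈ s) (ha : f a < 0) (hr : f r = 0) (har : a ≤ r) (hax : a ≤ x) :
    (f x < 0 ↔ x < r) ∧ (0 < f x ↔ r < x) := by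
  rcases lt_trichotomy x r with hxr | rfl | hrx
  · have := hf.neg_of_lt_of_eq_zero has hrs ha hr hax hxr
    exact ⟨iff_of_true this hxr, iff_of_false this.not_gt hxr.not_gt⟩
  · simp [hr]
  · have := hf.pos_of_eq_zero_of_lt has hxs ha hr har hrx
    exact ⟨iff_of_false this.not_gt hrx.not_gt, iff_of_true this hrx⟩

end ConvexSign

theorem convexOn_exp_affine_add_affine (a b c d : ℝ) :
    ConvexOn ℝ univ fun x => exp (a * x + b) + (c * x + d) := by
  refine ⟨convex_univ, fun x _ y _ α β hα hβ hαβ => ?_⟩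
  have hexp := convexOn_exp.2 (mem_univ (a * x + b)) (mem_univ (a * y + b)) hα hβ hαβ
  simp only [smul_eq_mul] at hexp ⊢
  have hlin : a * (α * x + β * y) + b = α * (a * x + b) + β * (a * y + b) := by
    linear_combination -b * hαβ
  rw [hlin]
  linear_combination hexp - d * hαβ

namespace UStar

variable {h : ℝ}

noncomputable def num (h ε : ℝ) : ℝ := exp ((1 + ε) * h) - 1 - ε * h

noncomputable def den (h ε : ℝ) : ℝ := 1 + ε * h - exp (-(1 + ε) * h)

noncomputable def gap (h s ε : ℝ) : ℝ := ε ^ 2 * num h ε - s * den h ε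

theorem convexOn_num (h : ℝ) : ConvexOn ℝ univ (num h) := by
  refine (convexOn_exp_affine_add_affine h h (-h) (-1)).congr fun ε _ => ?_
  simp only [num]
  ring_nf

theorem concaveOn_den (h : ℝ) : ConcaveOn ℝ univ (den h) := by
  refine neg_convexOn_iff.1 <| (convexOn_exp_affine_add_affine (-h) (-h) (-h) (-1)).congr
    fun ε _ => ?_
  simp only [den, Pi.neg_apply]
  ring_nf

theorem num_nonneg (hh : 0 ≤ h) (ε : ℝ) : 0 ≤ num h ε := by
  have := add_one_le_exp ((1 + ε) * h)
  simp only [num]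
  linarith

theorem monotoneOn_num (hh : 0 ≤ h) : MonotoneOn (num h) (Ici 0) := by
  intro x hx y _ hxy
  have hsplit : exp ((1 + y) * h) = exp ((1 + x) * h) * exp ((y - x) * h) := by
    rw [← exp_add]; ring_nf
  have hstep := add_one_le_exp ((y - x) * h)
  have hbase : 1 ≤ exp ((1 + x) * h) := one_le_exp (by nlinarith [mem_Ici.1 hx])
  have hinc : 0 ≤ (y - x) * h := mul_nonneg (sub_nonneg.2 hxy) hh
  simp only [num]
  nlinarith [mul_le_mul_of_nonneg_left hstep (exp_pos ((1 + x) * h)).le]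

theorem den_pos (hh : 0 < h) {ε : ℝ} (hε : 0 ≤ ε) : 0 < den h ε := by
  have : exp (-(1 + ε) * h) < 1 := exp_lt_one_iff.2 (by nlinarith)
  simp only [den]
  nlinarith [mul_nonneg hε hh.le]

theorem convexOn_gap (hh : 0 ≤ h) {s : ℝ} (hs : 0 ≤ s) : ConvexOn ℝ (Ici 0) (gap h s) :=
  ((convexOn_pow 2).mul ((convexOn_num h).subset (subset_univ _) (convex_Ici 0))
    (fun x _ => sq_nonneg x) (fun x _ => num_nonneg hh x)
    (pow_left_monotoneOn.monovaryOn (monotoneOn_num hh))).sub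
    (((concaveOn_den h).subset (subset_univ _) (convex_Ici 0)).smul hs)

theorem gap_zero_neg (hh : 0 < h) {s : ℝ} (hs : 0 < s) : gap h s 0 < 0 := by
  simpa [gap] using mul_pos hs (den_pos hh le_rfl)

theorem continuous_gap (h s : ℝ) : Continuous (gap h s) := by
  unfold gap num den
  fun_prop

theorem sub_eq_gap_div (hh : 0 < h) (s : ℝ) {ε : ℝ} (hε : 0 ≤ ε) :
    ε ^ 2 * num h ε / den h ε - s = gap h s ε / den h ε := by
  rw [gap, sub_div, mul_div_cancel_right₀ _ (den_pos hh hε).ne']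

end UStar

open UStar

theorem stmt_6 (h σ : ℝ) (hh : 0 < h) (hσ : 0 < σ) (u : ℝ → ℝ)
    (hu : ∀ ε : ℝ, u ε =
      ε ^ 2 * (Real.exp ((1 + ε) * h) - 1 - ε * h) /
        (1 + ε * h - Real.exp (-(1 + ε) * h)))
    (hgt : u (σ ^ 2) > σ ^ 2) :
    ∃! εt : ℝ, εt ∈ Set.Ioo 0 (σ ^ 2) ∧ u εt = σ ^ 2 ∧
      ∀ ε ∈ Set.Ioo (0 : ℝ) (σ ^ 2),
        (u ε - σ ^ 2 < 0 ↔ ε < εt) ∧ (0 < u ε - σ ^ 2 ↔ εt < ε) := by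
  have hs : 0 < σ ^ 2 := by positivity
  have hgap : ∀ ε, 0 ≤ ε → u ε - σ ^ 2 = gap h (σ ^ 2) ε / den h ε := fun ε hε =>
    (hu ε).symm ▸ sub_eq_gap_div hh _ hε
  have hsign : ∀ ε, 0 ≤ ε → (u ε - σ ^ 2 < 0 ↔ gap h (σ ^ 2) ε < 0) ∧
      (0 < u ε - σ ^ 2 ↔ 0 < gap h (σ ^ 2) ε) := fun ε hε => by
    rw [hgap ε hε, div_lt_iff₀ (den_pos hh hε), zero_mul, div_pos_iff_of_pos_right (den_pos hh hε)]
    exact ⟨Iff.rfl, Iff.rfl⟩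
  obtain ⟨εt, hεt, hroot⟩ := intermediate_value_Ioo hs.le (continuous_gap h _).continuousOn
    ⟨gap_zero_neg hh hs, (hsign _ hs.le).2.1 (sub_pos.2 hgt)⟩
  have hcmp : ∀ ε ∈ Ioo 0 (σ ^ 2), (u ε - σ ^ 2 < 0 ↔ ε < εt) ∧ (0 < u ε - σ ^ 2 ↔ εt < ε) :=
    fun ε hε => by
      rw [(hsign ε hε.1.le).1, (hsign ε hε.1.le).2]
      exact (convexOn_gap hh.le hs.le).neg_iff_and_pos_iff_of_eq_zero self_mem_Ici hεt.1.le
        hε.1.le (gap_zero_neg hh hs) hroot hεt.1.le hε.1.le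
  refine ⟨εt, ⟨hεt, ?_, hcmp⟩, fun y ⟨hy, huy, _⟩ => ?_⟩
  · rw [← sub_eq_zero, hgap εt hεt.1.le, hroot, zero_div]
  · have := hcmp y hy
    simp only [huy, sub_self, lt_self_iff_false, false_iff, not_lt] at this
    exact le_antisymm this.2 this.1
end

section
/- Fix h > 0, σ > 0, and w ∈ {−1, 0}. Define r(ε) := e^{(ε+w)h}(1 + εh)(ε² + σ²) − ε² e^{2(ε+w)h} − σ² for ε > |w|. Then r has a unique zero in (|w|, ∞), and r changes sign from positive to negative at that zero (r(ε) > 0 for ε below the zero and r(ε) < 0 above it, within (|w|,∞)). -/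
/-!
Writing `E = exp ((ε + w) h)`, one has `r(ε) = E · (σ² B(ε) - A(ε))` with
`A(ε) = ε² (E - 1 - εh)` and `B(ε) = 1 + εh - E⁻¹ > 0` on `ε > -w`. So `r(ε) < 0` exactly when
`σ² < A/B`. Once `A > 0` it stays positive (`E - 1 - εh` increases there), and wherever `A > 0`
the quotient `A/B` is strictly increasing: after clearing denominators, the sign of `(A/B)'` is
that of `(x² + 2x + 2) E - (x² + 4x + 2)` with `x = εh`, which is positive because `E > 1 + x`.
Hence `r` can only cross from `≥ 0` to `< 0`. It is positive just right of `-w`, where `E = 1`,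
`σ² B - A ≥ 0` and `(σ² B - A)' = 2h (σ² + w²) > 0`, and negative for large `ε`, so the
intermediate value theorem gives the unique sign-changing root.
-/

open Real Set Filter Topology

theorem exists_gt_lt_of_hasDerivAt_pos {f : ℝ → ℝ} {f' a : ℝ} (hf : HasDerivAt f f' a)
    (hf' : 0 < f') : ∃ x, a < x ∧ f a < f x := by
  have hslope : ∀ᶠ x in 𝓝[>] a, 0 < slope f a x :=
    (hasDerivAt_iff_tendsto_slope_left_right.1 hf).2.eventually (lt_mem_nhds hf')
  obtain ⟨x, hx, hax⟩ := (hslope.and self_mem_nhdsWithin).exists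
  refine ⟨x, hax, ?_⟩
  rw [slope_def_field] at hx
  exact sub_pos.1 ((div_pos_iff_of_pos_right (sub_pos.2 hax)).1 hx)

theorem existsUnique_zero_of_crossing {f : ℝ → ℝ} {a x y : ℝ} (hf : ContinuousOn f (Ioi a))
    (hax : a < x) (hay : a < y) (hx : 0 < f x) (hy : f y < 0)
    (hcross : ∀ u ∈ Ioi a, ∀ v, u < v → f u ≤ 0 → f v < 0) :
    ∃! z, z ∈ Ioi a ∧ f z = 0 ∧ ∀ ε ∈ Ioi a, (ε < z → 0 < f ε) ∧ (z < ε → f ε < 0) := by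
  have hxy : x < y := by
    by_contra! hyx
    rcases hyx.eq_or_lt with rfl | hyx
    · exact hy.not_gt hx
    · exact (hcross y hay x hyx hy.le).not_gt hx
  have hIcc : Icc x y ⊆ Ioi a := fun t ht => hax.trans_le ht.1
  obtain ⟨z, hz, hfz⟩ :=
    intermediate_value_Icc' hxy.le (hf.mono hIcc) ⟨hy.le, hx.le⟩
  have hza : z ∈ Ioi a := hIcc hz
  have hsign : ∀ ε ∈ Ioi a, (ε < z → 0 < f ε) ∧ (z < ε → f ε < 0) := fun ε hε =>
    ⟨fun hεz => lt_of_not_ge fun hfε => (hcross ε hε z hεz hfε).ne hfz,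
      fun hzε => hcross z hza ε hzε hfz.le⟩
  refine ⟨z, ⟨hza, hfz, hsign⟩, fun z' ⟨hz'a, hfz', _⟩ => ?_⟩
  rcases lt_trichotomy z' z with hlt | heq | hgt
  · exact absurd hfz' ((hsign z' hz'a).1 hlt).ne'
  · exact heq
  · exact absurd hfz' ((hsign z' hz'a).2 hgt).ne

namespace RRoot

variable (h w : ℝ)

noncomputable def expExcess (ε : ℝ) : ℝ := exp ((ε + w) * h) - 1 - ε * h

noncomputable def numer (ε : ℝ) : ℝ := ε ^ 2 * expExcess h w ε

noncomputable def denom (ε : ℝ) : ℝ := 1 + ε * h - exp (-((ε + w) * h))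

variable {h w}

theorem hasDerivAt_expExcess (ε : ℝ) :
    HasDerivAt (expExcess h w) (h * (exp ((ε + w) * h) - 1)) ε := by
  have hlin : HasDerivAt (fun ε : ℝ => (ε + w) * h) h ε := by
    simpa using ((hasDerivAt_id ε).add_const w).mul_const h
  exact ((hlin.exp.sub_const 1).fun_sub ((hasDerivAt_id ε).mul_const h)).congr_deriv (by ring)

theorem hasDerivAt_numer (ε : ℝ) :
    HasDerivAt (numer h w)
      (2 * ε * expExcess h w ε + ε ^ 2 * (h * (exp ((ε + w) * h) - 1))) ε :=
  ((hasDerivAt_pow 2 ε).fun_mul (hasDerivAt_expExcess ε)).congr_deriv (by norm_num)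

theorem hasDerivAt_denom (ε : ℝ) :
    HasDerivAt (denom h w) (h + h * exp (-((ε + w) * h))) ε := by
  have hlin : HasDerivAt (fun ε : ℝ => -((ε + w) * h)) (-h) ε := by
    simpa using (((hasDerivAt_id ε).add_const w).mul_const h).fun_neg
  exact ((((hasDerivAt_id ε).mul_const h).const_add 1).fun_sub hlin.exp).congr_deriv (by ring)

theorem add_mul_pos_of_neg_lt (hh : 0 < h) {ε : ℝ} (hε : -w < ε) : 0 < (ε + w) * h :=
  mul_pos (by linarith) hh

theorem expExcess_strictMonoOn (hh : 0 < h) : StrictMonoOn (expExcess h w) (Ici (-w)) := by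
  refine strictMonoOn_of_deriv_pos (convex_Ici _) ?_ fun ε hε => ?_
  · exact fun ε _ => (hasDerivAt_expExcess ε).continuousAt.continuousWithinAt
  rw [interior_Ici] at hε
  rw [(hasDerivAt_expExcess ε).deriv]
  exact mul_pos hh (sub_pos.2 (one_lt_exp_iff.2 (add_mul_pos_of_neg_lt hh hε)))

theorem denom_pos (hh : 0 < h) (hw : w ≤ 0) {ε : ℝ} (hε : -w < ε) : 0 < denom h w ε := by
  have : exp (-((ε + w) * h)) < 1 :=
    exp_lt_one_iff.2 (neg_neg_of_pos (add_mul_pos_of_neg_lt hh hε))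
  have : 0 < ε * h := mul_pos (by linarith) hh
  unfold denom
  linarith

theorem numer_deriv_mul_denom_sub_pos (hh : 0 < h) {ε : ℝ} (hε : 0 < ε)
    (hexc : 0 < expExcess h w ε) :
    0 < (2 * ε * expExcess h w ε + ε ^ 2 * (h * (exp ((ε + w) * h) - 1))) * denom h w ε -
      numer h w ε * (h + h * exp (-((ε + w) * h))) := by
  obtain ⟨E, hE⟩ : ∃ E, E = exp ((ε + w) * h) := ⟨_, rfl⟩
  obtain ⟨x, hx⟩ : ∃ x, x = ε * h := ⟨_, rfl⟩
  have hE0 : 0 < E := hE ▸ exp_pos _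
  have hx0 : 0 < x := hx ▸ mul_pos hε hh
  have hEx : 1 + x < E := by unfold expExcess at hexc; linarith
  have hid : (2 * ε * expExcess h w ε + ε ^ 2 * (h * (exp ((ε + w) * h) - 1))) * denom h w ε -
      numer h w ε * (h + h * exp (-((ε + w) * h))) =
      ε * (E - 1) * ((x ^ 2 + 2 * x + 2) * E - (x ^ 2 + 4 * x + 2)) / E := by
    unfold numer denom expExcess
    rw [exp_neg, ← hE]
    field_simp
    rw [hx]
    ring
  rw [hid]
  have hE1 : 0 < E - 1 := by linarith
  have hcubic : 0 < (x ^ 2 + 2 * x + 2) * E - (x ^ 2 + 4 * x + 2) := by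
    nlinarith [mul_pos (mul_pos hx0 hx0) hx0]
  positivity

theorem continuous_numer : Continuous (numer h w) := by
  unfold numer expExcess; fun_prop

theorem continuous_denom : Continuous (denom h w) := by
  unfold denom; fun_prop

theorem ratio_strictMonoOn (hh : 0 < h) (hw : w ≤ 0) {ε₁ : ℝ} (hε₁ : -w < ε₁)
    (hexc : 0 < expExcess h w ε₁) :
    StrictMonoOn (fun ε => numer h w ε / denom h w ε) (Ici ε₁) := by
  have hdom : ∀ ε ∈ Ici ε₁, -w < ε := fun ε hε => hε₁.trans_le hε
  refine strictMonoOn_of_deriv_pos (convex_Ici _) ?_ fun ε hε => ?_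
  · exact continuous_numer.continuousOn.div continuous_denom.continuousOn
      fun ε hε => (denom_pos hh hw (hdom ε hε)).ne'
  rw [interior_Ici] at hε
  have hεdom := hdom ε (mem_Ici.2 (le_of_lt hε))
  have hexcε : 0 < expExcess h w ε :=
    hexc.trans (expExcess_strictMonoOn hh hε₁.le hεdom.le hε)
  have hden := denom_pos hh hw hεdom
  rw [((hasDerivAt_numer ε).fun_div (hasDerivAt_denom ε) hden.ne').deriv]
  exact div_pos (numer_deriv_mul_denom_sub_pos hh (by linarith) hexcε) (by positivity)

theorem lt_numer_of_le_numer (hh : 0 < h) (hw : w ≤ 0) {c ε₁ ε₂ : ℝ} (hc : 0 < c)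
    (hε₁ : -w < ε₁) (h₁₂ : ε₁ < ε₂) (hle : c * denom h w ε₁ ≤ numer h w ε₁) :
    c * denom h w ε₂ < numer h w ε₂ := by
  have hden₁ := denom_pos hh hw hε₁
  have hden₂ := denom_pos hh hw (hε₁.trans h₁₂)
  have hexc : 0 < expExcess h w ε₁ :=
    pos_of_mul_pos_right ((mul_pos hc hden₁).trans_le hle) (sq_nonneg ε₁)
  have hratio := ratio_strictMonoOn hh hw hε₁ hexc (mem_Ici.2 le_rfl) (mem_Ici.2 h₁₂.le) h₁₂
  rw [← lt_div_iff₀ hden₂]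
  exact ((le_div_iff₀ hden₁).2 hle).trans_lt hratio

theorem exists_numer_lt (hh : 0 < h) (hw : w ≤ 0) {c : ℝ} (hc : 0 < c) :
    ∃ ε, -w < ε ∧ numer h w ε < c * denom h w ε := by
  have hexc : expExcess h w (-w) = w * h := by simp [expExcess]
  have hderiv : HasDerivAt (fun ε => c * denom h w ε - numer h w ε) (2 * h * (c + w ^ 2)) (-w) :=
    (((hasDerivAt_denom (-w)).const_mul c).fun_sub (hasDerivAt_numer (-w))).congr_deriv
      (by simp [hexc]; ring)
  obtain ⟨ε, hε, hlt⟩ := exists_gt_lt_of_hasDerivAt_pos hderiv (by positivity)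
  have hstart : 0 ≤ c * denom h w (-w) - numer h w (-w) := by
    simp only [denom, numer, hexc, neg_add_cancel, zero_mul, neg_zero, exp_zero]
    nlinarith [mul_nonneg (mul_nonneg (neg_nonneg.2 hw) hh.le) (add_nonneg hc.le (sq_nonneg w))]
  exact ⟨ε, hε, by linarith⟩

theorem exists_lt_numer (hh : 0 < h) (hw : w ≤ 0) {c : ℝ} (hc : 0 < c) :
    ∃ ε, -w < ε ∧ c * denom h w ε < numer h w ε := by
  -- `c < ε²`, and `t = (ε + w) h ≥ 4 - 4wh` makes `1 + t + t²/2 - 1 - εh ≥ 1 + εh`.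
  set ε := c + 1 + 4 / h - 5 * w
  have hε : c + 1 ≤ ε := by
    have : 0 < 4 / h := by positivity
    linarith
  have ht : 4 - 4 * w * h ≤ (ε + w) * h := by
    have : 4 / h * h = 4 := div_mul_cancel₀ 4 hh.ne'
    nlinarith
  have hwh : 0 ≤ -(w * h) := neg_nonneg.2 (mul_nonpos_of_nonpos_of_nonneg hw hh.le)
  have ht0 : 0 < (ε + w) * h := by linarith
  have hexc : 1 + ε * h ≤ expExcess h w ε := by
    have hquad := quadratic_le_exp_of_nonneg ht0.le
    have hsq := mul_le_mul_of_nonneg_right ht ht0.le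
    unfold expExcess
    nlinarith
  have hden : denom h w ε < 1 + ε * h := by
    unfold denom; linarith [exp_pos (-((ε + w) * h))]
  have hx : 0 < 1 + ε * h := by nlinarith
  refine ⟨ε, by nlinarith, ?_⟩
  calc c * denom h w ε < c * (1 + ε * h) := by gcongr
    _ < ε ^ 2 * (1 + ε * h) := by gcongr; nlinarith
    _ ≤ numer h w ε := by unfold numer; gcongr

variable (h w) in
noncomputable def rFun (σ ε : ℝ) : ℝ :=
  exp ((ε + w) * h) * (1 + ε * h) * (ε ^ 2 + σ ^ 2) - ε ^ 2 * exp (2 * (ε + w) * h) - σ ^ 2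

theorem rFun_eq (σ ε : ℝ) :
    rFun h w σ ε = exp ((ε + w) * h) * (σ ^ 2 * denom h w ε - numer h w ε) := by
  have hsq : exp (2 * (ε + w) * h) = exp ((ε + w) * h) * exp ((ε + w) * h) := by
    rw [← exp_add]; ring_nf
  have hinv : exp ((ε + w) * h) * exp (-((ε + w) * h)) = 1 := by
    rw [← exp_add, add_neg_cancel, exp_zero]
  unfold rFun numer denom expExcess
  linear_combination hsq * (-ε ^ 2) + σ ^ 2 * hinv

theorem rFun_pos_iff {σ ε : ℝ} : 0 < rFun h w σ ε ↔ numer h w ε < σ ^ 2 * denom h w ε := by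
  rw [rFun_eq, mul_pos_iff_of_pos_left (exp_pos _), sub_pos]

theorem rFun_neg_iff {σ ε : ℝ} : rFun h w σ ε < 0 ↔ σ ^ 2 * denom h w ε < numer h w ε := by
  rw [rFun_eq, ← neg_pos, ← mul_neg, mul_pos_iff_of_pos_left (exp_pos _), neg_pos, sub_neg]

theorem existsUnique_rFun_root (hh : 0 < h) (hw : w ≤ 0) {σ : ℝ} (hσ : σ ≠ 0) :
    ∃! ε₀, ε₀ ∈ Ioi (-w) ∧ rFun h w σ ε₀ = 0 ∧
      ∀ ε ∈ Ioi (-w), (ε < ε₀ → 0 < rFun h w σ ε) ∧ (ε₀ < ε → rFun h w σ ε < 0) := by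
  have hc : 0 < σ ^ 2 := by positivity
  obtain ⟨x, hx, hfx⟩ := exists_numer_lt hh hw hc
  obtain ⟨y, hy, hfy⟩ := exists_lt_numer hh hw hc
  refine existsUnique_zero_of_crossing (by unfold rFun; fun_prop) hx hy
    (rFun_pos_iff.2 hfx) (rFun_neg_iff.2 hfy) fun u hu v huv hfu => ?_
  have hle : σ ^ 2 * denom h w u ≤ numer h w u := not_lt.1 (rFun_pos_iff.not.1 hfu.not_gt)
  exact rFun_neg_iff.2 (lt_numer_of_le_numer hh hw hc hu huv hle)

end RRoot

open RRoot in
theorem stmt_7 (h σ w : ℝ) (hh : 0 < h) (hσ : 0 < σ)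
    (hw : w = -1 ∨ w = 0) (r : ℝ → ℝ)
    (hr : ∀ ε : ℝ, r ε =
      Real.exp ((ε + w) * h) * (1 + ε * h) * (ε ^ 2 + σ ^ 2) -
        ε ^ 2 * Real.exp (2 * (ε + w) * h) - σ ^ 2) :
    ∃! ε₀ : ℝ, ε₀ ∈ Set.Ioi |w| ∧ r ε₀ = 0 ∧
      ∀ ε ∈ Set.Ioi |w|, (ε < ε₀ → 0 < r ε) ∧ (ε₀ < ε → r ε < 0) := by
  have hw0 : w ≤ 0 := by rcases hw with rfl | rfl <;> norm_num
  obtain rfl : r = rFun h w σ := funext hr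
  rw [abs_of_nonpos hw0]
  exact existsUnique_rFun_root hh hw0 hσ.ne'
end

section
/- Fix h > 0, σ > 0, w real, and a random variable X with E X = 0 and E X² ≤ σ². Then the Winsorised-tilted mean E_{h,w}X := E[X e^{h(X∧w)}]/E[e^{h(X∧w)}] satisfies |E_{h,w}X| ≤ σ e^{h(σ + 2|w|)}. -/
/-!
The numerator is at most `e^{h|w|} E|X|`, because the Winsorised tilt `e^{h(X∧w)}` never exceeds
`e^{h|w|}`. The denominator is at least `e^{h E(X∧w)} ≥ e^{-h(E|X| + |w|)}` by Jensen's inequality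
for `exp`. Finally `(E|X|)² ≤ E X² ≤ σ²`, since `|X|` has nonnegative variance.
-/

open MeasureTheory ProbabilityTheory Real

section

variable {Ω : Type*} [MeasurableSpace Ω] {μ : Measure Ω}

lemma integral_abs_le_of_integral_sq_le [IsProbabilityMeasure μ] {X : Ω → ℝ} {σ : ℝ}
    (hσ : 0 ≤ σ) (hX : MemLp X 2 μ) (hvar : ∫ ω, X ω ^ 2 ∂μ ≤ σ ^ 2) :
    ∫ ω, |X ω| ∂μ ≤ σ := by
  have hsq : (∫ ω, |X ω| ∂μ) ^ 2 ≤ ∫ ω, X ω ^ 2 ∂μ := by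
    have := variance_nonneg |X| μ
    rw [variance_eq_sub hX.abs] at this
    simpa [sq_abs] using this
  exact le_of_pow_le_pow_left₀ two_ne_zero hσ (hsq.trans hvar)

lemma exp_integral_le_integral_exp [IsProbabilityMeasure μ] {f : Ω → ℝ} (hf : Integrable f μ)
    (hexp : Integrable (fun ω => exp (f ω)) μ) :
    exp (∫ ω, f ω ∂μ) ≤ ∫ ω, exp (f ω) ∂μ :=
  convexOn_exp.map_integral_le continuous_exp.continuousOn isClosed_univ (by simp) hf hexp

lemma abs_integral_mul_le {X g : Ω → ℝ} {C : ℝ} (hX : Integrable X μ)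
    (hg : AEStronglyMeasurable g μ) (hgC : ∀ ω, |g ω| ≤ C) :
    |∫ ω, X ω * g ω ∂μ| ≤ C * ∫ ω, |X ω| ∂μ := by
  calc |∫ ω, X ω * g ω ∂μ| ≤ ∫ ω, |X ω * g ω| ∂μ := abs_integral_le_integral_abs
    _ ≤ ∫ ω, C * |X ω| ∂μ := by
        refine integral_mono (hX.mul_bdd hg (.of_forall hgC)).abs (hX.abs.const_mul C)
          fun ω => ?_
        rw [abs_mul, mul_comm]
        exact mul_le_mul_of_nonneg_right (hgC ω) (abs_nonneg _)
    _ = C * ∫ ω, |X ω| ∂μ := integral_const_mul C _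

lemma exp_mul_min_le {h : ℝ} (hh : 0 ≤ h) (x w : ℝ) : exp (h * min x w) ≤ exp (h * |w|) :=
  exp_le_exp.2 (mul_le_mul_of_nonneg_left ((min_le_right x w).trans (le_abs_self w)) hh)

variable {X : Ω → ℝ} {h : ℝ}

lemma MeasureTheory.AEStronglyMeasurable.exp_mul_min (hX : AEStronglyMeasurable X μ) (h w : ℝ) :
    AEStronglyMeasurable (fun ω => exp (h * min (X ω) w)) μ :=
  (by fun_prop : Continuous fun x => exp (h * min x w)).comp_aestronglyMeasurable hX

lemma abs_integral_mul_exp_mul_min_le (hh : 0 ≤ h) (hX : Integrable X μ) (w : ℝ) :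
    |∫ ω, X ω * exp (h * min (X ω) w) ∂μ| ≤ exp (h * |w|) * ∫ ω, |X ω| ∂μ :=
  abs_integral_mul_le hX (hX.aestronglyMeasurable.exp_mul_min h w) fun ω => by
    rw [abs_of_pos (exp_pos _)]
    exact exp_mul_min_le hh _ _

lemma neg_le_integral_min [IsProbabilityMeasure μ] (hX : Integrable X μ) (w : ℝ) :
    -(∫ ω, |X ω| ∂μ + |w|) ≤ ∫ ω, min (X ω) w ∂μ :=
  calc -(∫ ω, |X ω| ∂μ + |w|) = ∫ ω, (-|X ω| - |w|) ∂μ := by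
        rw [integral_sub hX.abs.fun_neg (integrable_const _), integral_neg, integral_const]
        simp only [probReal_univ, smul_eq_mul, one_mul]
        ring
    _ ≤ ∫ ω, min (X ω) w ∂μ :=
        integral_mono (hX.abs.fun_neg.sub (integrable_const _)) (hX.inf (integrable_const w))
          fun ω => le_min (by linarith [neg_abs_le (X ω), abs_nonneg w])
            (by linarith [neg_abs_le w, abs_nonneg (X ω)])

lemma exp_neg_le_integral_exp_mul_min [IsProbabilityMeasure μ] (hh : 0 ≤ h) (hX : Integrable X μ)
    (w : ℝ) : exp (-(h * (∫ ω, |X ω| ∂μ + |w|))) ≤ ∫ ω, exp (h * min (X ω) w) ∂μ := by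
  have hexp : Integrable (fun ω => exp (h * min (X ω) w)) μ :=
    .of_bound (hX.aestronglyMeasurable.exp_mul_min h w) (exp (h * |w|)) (.of_forall fun ω => by
      rw [norm_of_nonneg (exp_pos _).le]
      exact exp_mul_min_le hh _ _)
  calc exp (-(h * (∫ ω, |X ω| ∂μ + |w|))) ≤ exp (∫ ω, h * min (X ω) w ∂μ) := by
        rw [integral_const_mul, ← mul_neg]
        exact exp_le_exp.2 (mul_le_mul_of_nonneg_left (neg_le_integral_min hX w) hh)
    _ ≤ ∫ ω, exp (h * min (X ω) w) ∂μ :=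
        exp_integral_le_integral_exp ((hX.inf (integrable_const w)).const_mul h) hexp

lemma abs_integral_mul_exp_mul_min_div_le [IsProbabilityMeasure μ] (hh : 0 ≤ h)
    (hX : Integrable X μ) (w : ℝ) :
    |(∫ ω, X ω * exp (h * min (X ω) w) ∂μ) / (∫ ω, exp (h * min (X ω) w) ∂μ)| ≤
      (∫ ω, |X ω| ∂μ) * exp (h * (∫ ω, |X ω| ∂μ + 2 * |w|)) := by
  have hden := exp_neg_le_integral_exp_mul_min hh hX w
  have hden_pos := (exp_pos _).trans_le hden
  rw [abs_div, abs_of_pos hden_pos, div_le_iff₀ hden_pos]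
  calc |∫ ω, X ω * exp (h * min (X ω) w) ∂μ| ≤ exp (h * |w|) * ∫ ω, |X ω| ∂μ :=
        abs_integral_mul_exp_mul_min_le hh hX w
    _ = (∫ ω, |X ω| ∂μ) * exp (h * (∫ ω, |X ω| ∂μ + 2 * |w|)) *
          exp (-(h * (∫ ω, |X ω| ∂μ + |w|))) := by
        rw [mul_assoc, ← exp_add, mul_comm]
        ring_nf
    _ ≤ _ := by gcongr

end

theorem stmt_9_general {Ω : Type*} [MeasurableSpace Ω] (μ : Measure Ω) [IsProbabilityMeasure μ]
    (h σ w : ℝ) (hh : 0 < h) (hσ : 0 < σ) (X : Ω → ℝ)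
    (hX1 : Integrable X μ) (hX2 : Integrable (fun ω => X ω ^ 2) μ)
    (hvar : ∫ ω, X ω ^ 2 ∂μ ≤ σ ^ 2) :
    |(∫ ω, X ω * Real.exp (h * min (X ω) w) ∂μ) /
        (∫ ω, Real.exp (h * min (X ω) w) ∂μ)| ≤
      σ * Real.exp (h * (σ + 2 * |w|)) := by
  have hσ_abs : ∫ ω, |X ω| ∂μ ≤ σ := integral_abs_le_of_integral_sq_le hσ.le
    ((memLp_two_iff_integrable_sq hX1.aestronglyMeasurable).2 hX2) hvar
  calc _ ≤ (∫ ω, |X ω| ∂μ) * exp (h * (∫ ω, |X ω| ∂μ + 2 * |w|)) :=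
        abs_integral_mul_exp_mul_min_div_le hh.le hX1 w
    _ ≤ σ * exp (h * (σ + 2 * |w|)) := by
        have : 0 ≤ ∫ ω, |X ω| ∂μ := integral_nonneg fun ω => abs_nonneg (X ω)
        gcongr

theorem stmt_9 {Ω : Type*} [MeasurableSpace Ω] (μ : Measure Ω) [IsProbabilityMeasure μ]
    (h σ w : ℝ) (hh : 0 < h) (hσ : 0 < σ) (X : Ω → ℝ) (hX : Measurable X)
    (hX1 : Integrable X μ) (hX2 : Integrable (fun ω => X ω ^ 2) μ)
    (hmean : ∫ ω, X ω ∂μ = 0) (hvar : ∫ ω, X ω ^ 2 ∂μ ≤ σ ^ 2) :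
    |(∫ ω, X ω * Real.exp (h * min (X ω) w) ∂μ) /
        (∫ ω, Real.exp (h * min (X ω) w) ∂μ)| ≤
      σ * Real.exp (h * (σ + 2 * |w|)) :=
  stmt_9_general μ h σ w hh hσ X hX1 hX2 hvar
end

section
/- Fix h > 0, w real, and a random variable X with E(0∨X) < ∞. Then the Winsorised-tilted mean E_{h,w}X := E[X e^{h(X∧w)}]/E[e^{h(X∧w)}] is nondecreasing in h ∈ (0,∞). -/
/-! Write `m = X ∧ w`, `f = e^{h₁ m}` and `g = e^{h₂ m}`. For `h₁ ≤ h₂` the ratio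
`g / f = e^{(h₂ - h₁) m}` is nondecreasing in `X`, so for two independent copies `ω, ω'` the product
`(X ω - X ω') (g ω f ω' - f ω g ω')` is nonnegative. Its integral over `μ ⊗ μ` is
`2 (∫ X g · ∫ f - ∫ X f · ∫ g)`, and nonnegativity of this is the claim after cross-multiplying:
Chebyshev's covariance inequality under the measure tilted by `f`. -/

open MeasureTheory

section

variable {Ω : Type*} [MeasurableSpace Ω] {μ : Measure Ω}

theorem integral_mul_integral_le_of_monotone_ratio [SFinite μ] {X f g : Ω → ℝ}
    (hf : Integrable f μ) (hg : Integrable g μ)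
    (hXf : Integrable (fun ω => X ω * f ω) μ) (hXg : Integrable (fun ω => X ω * g ω) μ)
    (hratio : ∀ ω ω', X ω' ≤ X ω → f ω * g ω' ≤ g ω * f ω') :
    (∫ ω, X ω * f ω ∂μ) * ∫ ω, g ω ∂μ ≤ (∫ ω, X ω * g ω ∂μ) * ∫ ω, f ω ∂μ := by
  have hpair : ∀ p : Ω × Ω, 0 ≤ (X p.1 - X p.2) * (g p.1 * f p.2 - f p.1 * g p.2) := by
    rintro ⟨ω, ω'⟩
    rcases le_total (X ω') (X ω) with hle | hle
    · exact mul_nonneg (sub_nonneg.2 hle) (sub_nonneg.2 (hratio ω ω' hle))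
    · refine mul_nonneg_of_nonpos_of_nonpos (sub_nonpos.2 hle) ?_
      linarith [hratio ω' ω hle]
  have hexpand : (fun p : Ω × Ω => (X p.1 - X p.2) * (g p.1 * f p.2 - f p.1 * g p.2)) =
      fun p => (X p.1 * g p.1 * f p.2 - X p.1 * f p.1 * g p.2) +
        (f p.1 * (X p.2 * g p.2) - g p.1 * (X p.2 * f p.2)) := by
    funext p
    ring
  have hsymm : 0 ≤ ∫ p, (X p.1 - X p.2) * (g p.1 * f p.2 - f p.1 * g p.2) ∂μ.prod μ :=
    integral_nonneg hpair
  have hfirst : Integrable (fun p : Ω × Ω => X p.1 * g p.1 * f p.2 - X p.1 * f p.1 * g p.2)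
      (μ.prod μ) := (hXg.mul_prod hf).sub (hXf.mul_prod hg)
  have hsecond : Integrable (fun p : Ω × Ω => f p.1 * (X p.2 * g p.2) - g p.1 * (X p.2 * f p.2))
      (μ.prod μ) := (hf.mul_prod hXg).sub (hg.mul_prod hXf)
  rw [hexpand, integral_add hfirst hsecond, integral_sub (hXg.mul_prod hf) (hXf.mul_prod hg),
    integral_sub (hf.mul_prod hXg) (hg.mul_prod hXf),
    integral_prod_mul (fun ω => X ω * g ω) f, integral_prod_mul (fun ω => X ω * f ω) g,
    integral_prod_mul f (fun ω => X ω * g ω), integral_prod_mul g (fun ω => X ω * f ω)] at hsymm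
  linarith

theorem exp_mul_min_mul_exp_mul_min_le {h₁ h₂ : ℝ} (hle : h₁ ≤ h₂) (w : ℝ) {x y : ℝ} (hyx : y ≤ x) :
    Real.exp (h₁ * min x w) * Real.exp (h₂ * min y w) ≤
      Real.exp (h₂ * min x w) * Real.exp (h₁ * min y w) := by
  rw [← Real.exp_add, ← Real.exp_add, Real.exp_le_exp]
  nlinarith [min_le_min_right w hyx]

theorem neg_mul_exp_mul_le_inv {h : ℝ} (hh : 0 < h) (x : ℝ) : -x * Real.exp (h * x) ≤ h⁻¹ := by
  have hexp : Real.exp (-(h * x)) * Real.exp (h * x) = 1 := by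
    rw [← Real.exp_add, neg_add_cancel, Real.exp_zero]
  have hprod : h * (-x * Real.exp (h * x)) ≤ 1 := by
    nlinarith [Real.add_one_le_exp (-(h * x)), Real.exp_pos (h * x)]
  rwa [← le_div_iff₀' hh, one_div] at hprod

theorem abs_mul_exp_mul_min_le {h : ℝ} (hh : 0 < h) (x w : ℝ) :
    |x| * Real.exp (h * min x w) ≤ max 0 x * Real.exp (h * w) + h⁻¹ := by
  rcases le_total 0 x with hx | hx
  · rw [abs_of_nonneg hx, max_eq_right hx]
    have : Real.exp (h * min x w) ≤ Real.exp (h * w) :=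
      Real.exp_le_exp.2 (mul_le_mul_of_nonneg_left (min_le_right x w) hh.le)
    nlinarith [inv_pos.2 hh]
  · rw [abs_of_nonpos hx, max_eq_left hx, zero_mul, zero_add]
    calc -x * Real.exp (h * min x w) ≤ -x * Real.exp (h * x) :=
          mul_le_mul_of_nonneg_left
            (Real.exp_le_exp.2 (mul_le_mul_of_nonneg_left (min_le_left x w) hh.le)) (neg_nonneg.2 hx)
      _ ≤ h⁻¹ := neg_mul_exp_mul_le_inv hh x

theorem integrable_exp_mul_min [IsFiniteMeasure μ] {X : Ω → ℝ} (hX : Measurable X) (w : ℝ)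
    {h : ℝ} (hh : 0 ≤ h) : Integrable (fun ω => Real.exp (h * min (X ω) w)) μ := by
  refine (integrable_const (Real.exp (h * w))).mono'
    (Real.measurable_exp.comp ((hX.min measurable_const).const_mul h)).aestronglyMeasurable
    (Filter.Eventually.of_forall fun ω => ?_)
  rw [Real.norm_eq_abs, abs_of_pos (Real.exp_pos _), Real.exp_le_exp]
  exact mul_le_mul_of_nonneg_left (min_le_right _ _) hh

theorem integrable_mul_exp_mul_min [IsFiniteMeasure μ] {X : Ω → ℝ} (hX : Measurable X)
    (hint : Integrable (fun ω => max 0 (X ω)) μ) (w : ℝ) {h : ℝ} (hh : 0 < h) :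
    Integrable (fun ω => X ω * Real.exp (h * min (X ω) w)) μ := by
  refine ((hint.mul_const (Real.exp (h * w))).add (integrable_const h⁻¹)).mono'
    (hX.mul (Real.measurable_exp.comp ((hX.min measurable_const).const_mul h))).aestronglyMeasurable
    (Filter.Eventually.of_forall fun ω => ?_)
  rw [Real.norm_eq_abs, abs_mul, abs_of_pos (Real.exp_pos _)]
  exact abs_mul_exp_mul_min_le hh (X ω) w

end

theorem stmt_10 {Ω : Type*} [MeasurableSpace Ω] (μ : Measure Ω) [IsProbabilityMeasure μ]
    (w : ℝ) (X : Ω → ℝ) (hX : Measurable X)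
    (hint : Integrable (fun ω => max 0 (X ω)) μ)
    (h₁ h₂ : ℝ) (hh₁ : 0 < h₁) (hle : h₁ ≤ h₂) :
    (∫ ω, X ω * Real.exp (h₁ * min (X ω) w) ∂μ) /
        (∫ ω, Real.exp (h₁ * min (X ω) w) ∂μ) ≤
      (∫ ω, X ω * Real.exp (h₂ * min (X ω) w) ∂μ) /
        (∫ ω, Real.exp (h₂ * min (X ω) w) ∂μ) := by
  have hh₂ : 0 < h₂ := hh₁.trans_le hle
  have hf := integrable_exp_mul_min (μ := μ) hX w hh₁.le
  have hg := integrable_exp_mul_min (μ := μ) hX w hh₂.le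
  rw [div_le_div_iff₀ (integral_exp_pos hf) (integral_exp_pos hg)]
  exact integral_mul_integral_le_of_monotone_ratio hf hg
    (integrable_mul_exp_mul_min hX hint w hh₁) (integrable_mul_exp_mul_min hX hint w hh₂)
    fun _ _ => exp_mul_min_mul_exp_mul_min_le hle w
end

section
/- Fix h > 0. Define ρ(ε) := (e^{(1+ε)h} − 1)/(1 + ε e^{(1+ε)h}) for ε > 0. Then ρ is strictly decreasing on (0,∞), and consequently ρ(ε) < e^h − 1 for every ε > 0, with sup_{ε>0} ρ(ε) = e^h − 1. -/
/-! The derivative of `ρ` is `E (1 + x - E) / (1 + ε E)²` with `x = (1 + ε) h` and `E = eˣ`,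
which is negative for `ε > 0` because `eˣ > 1 + x` when `x ≠ 0`. So `ρ` strictly decreases on
`[0, ∞)`, and its supremum over `(0, ∞)` is the value `ρ 0 = eʰ - 1`, approached by continuity. -/

open Real Set

theorem isLUB_image_Ioi_of_antitoneOn_Ici {α β : Type*} [TopologicalSpace α] [LinearOrder α]
    [OrderTopology α] [DenselyOrdered α] [NoMaxOrder α] [TopologicalSpace β] [LinearOrder β]
    [OrderTopology β] {f : α → β} {a : α} (hf : AntitoneOn f (Ici a))
    (hc : ContinuousWithinAt f (Ioi a) a) : IsLUB (f '' Ioi a) (f a) := by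
  refine isLUB_of_mem_closure ?_ (hc.mem_closure_image (by rw [closure_Ioi]; exact self_mem_Ici))
  rintro _ ⟨x, hx, rfl⟩
  exact hf self_mem_Ici (Ioi_subset_Ici_self hx) (le_of_lt hx)

noncomputable def expRatio (h ε : ℝ) : ℝ :=
  (exp ((1 + ε) * h) - 1) / (1 + ε * exp ((1 + ε) * h))

theorem expRatio_zero (h : ℝ) : expRatio h 0 = exp h - 1 := by
  simp [expRatio]

theorem hasDerivAt_expRatio (h : ℝ) {ε : ℝ} (hD : 1 + ε * exp ((1 + ε) * h) ≠ 0) :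
    HasDerivAt (expRatio h)
      (exp ((1 + ε) * h) * (1 + (1 + ε) * h - exp ((1 + ε) * h)) /
        (1 + ε * exp ((1 + ε) * h)) ^ 2) ε := by
  have hE : HasDerivAt (fun x ↦ exp ((1 + x) * h)) (exp ((1 + ε) * h) * h) ε := by
    simpa using (((hasDerivAt_id ε).const_add 1).mul_const h).exp
  refine ((hE.sub_const 1).div (((hasDerivAt_id' ε).fun_mul hE).const_add 1) hD).congr_deriv ?_
  field_simp
  ring

theorem deriv_expRatio_neg {h ε : ℝ} (hx : (1 + ε) * h ≠ 0)
    (hD : 1 + ε * exp ((1 + ε) * h) ≠ 0) : deriv (expRatio h) ε < 0 := by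
  rw [(hasDerivAt_expRatio h hD).deriv]
  have hlt : 1 + (1 + ε) * h - exp ((1 + ε) * h) < 0 := by
    linarith [add_one_lt_exp hx]
  exact div_neg_of_neg_of_pos (mul_neg_of_pos_of_neg (exp_pos _) hlt) (by positivity)

theorem expRatio_denom_pos (h : ℝ) {ε : ℝ} (hε : 0 ≤ ε) : 0 < 1 + ε * exp ((1 + ε) * h) := by
  positivity

theorem continuousOn_expRatio_Ici (h : ℝ) : ContinuousOn (expRatio h) (Ici 0) := fun _ hε ↦
  (hasDerivAt_expRatio h (expRatio_denom_pos h hε).ne').continuousAt.continuousWithinAt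

theorem strictAntiOn_expRatio {h : ℝ} (hh : h ≠ 0) : StrictAntiOn (expRatio h) (Ici 0) := by
  refine strictAntiOn_of_deriv_neg (convex_Ici 0) (continuousOn_expRatio_Ici h) fun ε hε ↦ ?_
  rw [interior_Ici] at hε
  exact deriv_expRatio_neg (mul_ne_zero (by linarith [mem_Ioi.mp hε]) hh)
    (expRatio_denom_pos h (le_of_lt hε)).ne'

theorem stmt_14 (h : ℝ) (hh : 0 < h) (ρ : ℝ → ℝ)
    (hρ : ∀ ε : ℝ, ρ ε =
      (Real.exp ((1 + ε) * h) - 1) / (1 + ε * Real.exp ((1 + ε) * h))) :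
    StrictAntiOn ρ (Set.Ioi 0) ∧
    (∀ ε : ℝ, 0 < ε → ρ ε < Real.exp h - 1) ∧
    IsLUB (ρ '' Set.Ioi 0) (Real.exp h - 1) := by
  obtain rfl : ρ = expRatio h := funext hρ
  have hanti := strictAntiOn_expRatio hh.ne'
  refine ⟨hanti.mono Ioi_subset_Ici_self, fun ε hε ↦ ?_, ?_⟩
  · rw [← expRatio_zero h]
    exact hanti self_mem_Ici (le_of_lt hε) hε
  · rw [← expRatio_zero h]
    exact isLUB_image_Ioi_of_antitoneOn_Ici hanti.antitoneOn
      (continuousOn_expRatio_Ici h |>.continuousWithinAt self_mem_Ici |>.mono Ioi_subset_Ici_self)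
end

section
/- Fix h > 0 and w ∈ {−1, 0}. Define ρ(ε) := (1 − e^{−(w+ε)h})/ε for ε > −w (so ε > 1 if w = −1, ε > 0 if w = 0). Then ρ(ε) ≤ h / (−L), where L is the unique root u ≤ −1 of u e^u = −e^{hw − 1}; moreover ρ'(ε) has the same sign as (1+εh)e^{−(w+ε)h} − 1, and ρ attains its supremum at ε_* = −(1 + L)/h. -/
/-!
The exponent `a = 1 + L - w h` satisfies `L e^a = -1`, so the concave function `y ↦ L e^y`
lies below its tangent line `y ↦ a - 1 - y` at `a`. Evaluated at `y = -(w + ε) h` this is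
exactly `ρ ε ≤ h / (-L)`. Since `L ≤ -1` forces `a ≤ 0`, the critical point
`ε_* = -(1 + L) / h` lies in `[-w, ∞)`, and `ρ ε_* = (1 + 1/L) / ε_* = h / (-L)`; when `L = -1`
the point `ε_*` is `0` and `h / (-L) = h` is the derivative of the numerator there.
-/

open Real Filter Topology Set

lemma Real.sign_div_of_pos {a b : ℝ} (hb : 0 < b) : sign (a / b) = sign a := by
  rcases lt_trichotomy a 0 with ha | rfl | ha
  · rw [sign_of_neg ha, sign_of_neg (div_neg_of_neg_of_pos ha hb)]
  · rw [zero_div]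
  · rw [sign_of_pos ha, sign_of_pos (div_pos ha hb)]

lemma mul_exp_sub_eq_neg_one {L u : ℝ} (hL : L * exp L = -exp u) : L * exp (L - u) = -1 := by
  rw [exp_sub, ← mul_div_assoc, hL, neg_div, div_self (exp_pos u).ne']

lemma neg_of_mul_exp_eq_neg_one {L a : ℝ} (ha : L * exp a = -1) : L < 0 := by
  by_contra! hL
  linarith [mul_nonneg hL (exp_pos a).le]

lemma mul_exp_le_of_mul_exp_eq_neg_one {L a : ℝ} (ha : L * exp a = -1) (y : ℝ) :
    L * exp y ≤ a - 1 - y := by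
  have hexp : exp (y - a) = -L * exp y := by
    rw [exp_sub, div_eq_iff (exp_pos a).ne']
    linear_combination exp y * ha
  linarith [add_one_le_exp (y - a)]

lemma nonpos_of_mul_exp_eq_neg_one {L a : ℝ} (ha : L * exp a = -1) (hL : L ≤ -1) : a ≤ 0 := by
  rw [← exp_le_one_iff]
  nlinarith [exp_pos a]

/-- The ratio `ρ_{h,w}`. -/
noncomputable def extremalRatio (h w ε : ℝ) : ℝ :=
  (1 - exp (-(w + ε) * h)) / ε

section extremalRatio

variable {h w L : ℝ}

lemma extremalRatio_le (hL : L * exp (1 + L - w * h) = -1) {ε : ℝ} (hε : 0 < ε) :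
    extremalRatio h w ε ≤ h / (-L) := by
  have hL0 := neg_of_mul_exp_eq_neg_one hL
  have htangent := mul_exp_le_of_mul_exp_eq_neg_one hL (-(w + ε) * h)
  rw [extremalRatio, div_le_div_iff₀ hε (by linarith)]
  linarith

lemma hasDerivAt_one_sub_exp (h w ε : ℝ) :
    HasDerivAt (fun x => 1 - exp (-(w + x) * h)) (h * exp (-(w + ε) * h)) ε := by
  have hlin : HasDerivAt (fun x : ℝ => -(w + x) * h) (-h) ε := by
    simpa using ((hasDerivAt_id ε).const_add w).neg.mul_const h
  exact (hlin.exp.const_sub 1).congr_deriv (by ring)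

lemma hasDerivAt_extremalRatio {ε : ℝ} (hε : ε ≠ 0) :
    HasDerivAt (extremalRatio h w) (((1 + ε * h) * exp (-(w + ε) * h) - 1) / ε ^ 2) ε :=
  ((hasDerivAt_one_sub_exp h w ε).div (hasDerivAt_id' ε) hε).congr_deriv (by ring)

lemma sign_deriv_extremalRatio {ε : ℝ} (hε : ε ≠ 0) :
    sign (deriv (extremalRatio h w) ε) = sign ((1 + ε * h) * exp (-(w + ε) * h) - 1) := by
  rw [(hasDerivAt_extremalRatio hε).deriv, sign_div_of_pos (by positivity)]

lemma tendsto_extremalRatio_zero (h : ℝ) : Tendsto (extremalRatio h 0) (𝓝[≠] 0) (𝓝 h) := by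
  have hslope := hasDerivAt_iff_tendsto_slope.mp (hasDerivAt_one_sub_exp h 0 0)
  simp only [add_zero, neg_zero, zero_mul, exp_zero, mul_one] at hslope
  refine hslope.congr fun ε => ?_
  simp [slope_def_field, extremalRatio]

lemma extremalRatio_critical (hh : h ≠ 0) (hL : L * exp (1 + L - w * h) = -1) (hL1 : L ≠ -1) :
    extremalRatio h w (-(1 + L) / h) = h / (-L) := by
  have hL0 := (neg_of_mul_exp_eq_neg_one hL).ne
  have h1L : 1 + L ≠ 0 := by contrapose! hL1; linarith
  have hexponent : -(w + -(1 + L) / h) * h = 1 + L - w * h := by field_simp; ring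
  have hexp : exp (1 + L - w * h) = -1 / L := by rw [eq_div_iff hL0]; linarith
  rw [extremalRatio, hexponent, hexp]
  field_simp
  ring

lemma tendsto_extremalRatio (hh : h ≠ 0) (hL : L * exp (1 + L - w * h) = -1) :
    Tendsto (extremalRatio h w) (𝓝[>] (-(1 + L) / h)) (𝓝 (h / (-L))) := by
  by_cases hL1 : L = -1
  · subst hL1
    obtain rfl : w = 0 := by
      have hwh : w * h = 0 := by simpa using hL
      exact (mul_eq_zero.mp hwh).resolve_right hh
    rw [add_neg_cancel, neg_zero, zero_div, neg_neg, div_one]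
    exact (tendsto_extremalRatio_zero h).mono_left (nhdsWithin_mono _ fun x hx => ne_of_gt hx)
  · have hcont : ContinuousAt (extremalRatio h w) (-(1 + L) / h) :=
      ((by fun_prop : Continuous fun ε => 1 - exp (-(w + ε) * h)).continuousAt).div
        continuousAt_id (div_ne_zero (by contrapose! hL1; linarith) hh)
    rw [← extremalRatio_critical hh hL hL1]
    exact hcont.tendsto.mono_left nhdsWithin_le_nhds

end extremalRatio

theorem stmt_16 (h w L : ℝ) (hh : 0 < h) (hw : w = -1 ∨ w = 0)
    (hL₁ : L ≤ -1) (hL₂ : L * Real.exp L = -Real.exp (h * w - 1))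
    (ρ : ℝ → ℝ)
    (hρ : ∀ ε : ℝ, ρ ε = (1 - Real.exp (-(w + ε) * h)) / ε) :
    (∀ ε : ℝ, -w < ε → ρ ε ≤ h / (-L)) ∧
    (∀ ε : ℝ, -w < ε →
      Real.sign (deriv ρ ε) =
        Real.sign ((1 + ε * h) * Real.exp (-(w + ε) * h) - 1)) ∧
    IsLUB (ρ '' Set.Ioi (-w)) (h / (-L)) ∧
    Filter.Tendsto ρ (nhdsWithin (-(1 + L) / h) (Set.Ioi (-(1 + L) / h)))
      (nhds (h / (-L))) := by
  obtain rfl : ρ = extremalRatio h w := funext hρ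
  have hcrit : L * exp (1 + L - w * h) = -1 := by
    convert mul_exp_sub_eq_neg_one hL₂ using 3; ring
  have hpos : ∀ ε, -w < ε → 0 < ε := fun ε hε => by rcases hw with rfl | rfl <;> linarith
  have hle := fun ε hε => extremalRatio_le hcrit (hpos ε hε)
  have hlim := tendsto_extremalRatio hh.ne' hcrit
  have hstart : -w ≤ -(1 + L) / h := by
    rw [le_div_iff₀ hh]
    linarith [nonpos_of_mul_exp_eq_neg_one hcrit hL₁]
  refine ⟨hle, fun ε hε => sign_deriv_extremalRatio (hpos ε hε).ne', ?_, hlim⟩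
  refine isLUB_of_mem_closure (forall_mem_image.mpr hle) (mem_closure_of_tendsto hlim ?_)
  filter_upwards [self_mem_nhdsWithin] with ε hε
  exact mem_image_of_mem _ (lt_of_le_of_lt hstart hε)
end

section
/- Fix h > 0 and real c₁, c₂, k, and c₃ > 0, and w real. Define d̃(s) := c₁ + c₂ s + c₃ s² − (s − k)e^{h(s∧w)} for s ∈ ℝ. If d̃(s) ≥ 0 for all s ∈ ℝ, then d̃ has at most one zero in (−∞, w) and at most one zero in [w, ∞); in particular d̃ has at most two zeros. -/
/-!
Below `w` the function agrees with the smooth `F s = c₁ + c₂ s + c₃ s² - (s - k) e^{h s}`, so a zero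
`z < w` of the nonnegative `d` is a minimum of `F`: there the quadratic touches `(s - k) e^{h s}` in
value and slope. Eliminating `c₁, c₂, k` from two such tangencies at `u < v` gives, with
`A = e^{h u}`, `B = e^{h v}`, `δ = h (v - u)`,
  `c₃ (v - u) (δ (A + B) - 2 (B - A)) = A B δ² - (B - A)²`.
The trapezoid and midpoint bounds for `∫ exp` (i.e. `sinh t < t cosh t` and `t < sinh t`) make the
bracket on the left positive and the right side negative, forcing `c₃ < 0`.
At or above `w` the function is a quadratic with leading coefficient `c₃ > 0`, which would be
negative at the midpoint of two distinct zeros.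
-/

open Real Set

namespace Real

theorem sinh_lt_mul_cosh {x : ℝ} (hx : 0 < x) : sinh x < x * cosh x := by
  have hderiv (y : ℝ) : HasDerivAt (fun y ↦ y * cosh y - sinh y) (y * sinh y) y :=
    (((hasDerivAt_id' y).mul (hasDerivAt_cosh y)).sub (hasDerivAt_sinh y)).congr_deriv
      (by ring)
  have hmono : StrictMonoOn (fun y ↦ y * cosh y - sinh y) (Ici 0) := by
    refine strictMonoOn_of_deriv_pos (convex_Ici 0)
      (fun y _ ↦ (hderiv y).continuousAt.continuousWithinAt) fun y hy ↦ ?_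
    rw [interior_Ici, mem_Ioi] at hy
    rw [(hderiv y).deriv]
    exact mul_pos hy (sinh_pos_iff.mpr hy)
  simpa using hmono self_mem_Ici hx.le hx

theorem exp_eq_exp_midpoint_mul (x y : ℝ) :
    exp x = exp ((x + y) / 2) * exp (-((y - x) / 2)) ∧
      exp y = exp ((x + y) / 2) * exp ((y - x) / 2) := by
  constructor <;> rw [← exp_add] <;> ring_nf

theorem sub_mul_exp_midpoint_lt_exp_sub_exp {x y : ℝ} (hxy : x < y) :
    (y - x) * exp ((x + y) / 2) < exp y - exp x := by
  obtain ⟨hx, hy⟩ := exp_eq_exp_midpoint_mul x y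
  have ht : (y - x) / 2 < sinh ((y - x) / 2) := self_lt_sinh_iff.mpr (by linarith)
  rw [sinh_eq] at ht
  rw [hx, hy]
  nlinarith [exp_pos ((x + y) / 2)]

theorem two_mul_exp_sub_exp_lt {x y : ℝ} (hxy : x < y) :
    2 * (exp y - exp x) < (y - x) * (exp x + exp y) := by
  obtain ⟨hx, hy⟩ := exp_eq_exp_midpoint_mul x y
  have ht := sinh_lt_mul_cosh (x := (y - x) / 2) (by linarith)
  rw [sinh_eq, cosh_eq] at ht
  rw [hx, hy]
  nlinarith [exp_pos ((x + y) / 2)]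

end Real

section QuadraticMinusExp

variable {c₁ c₂ c₃ h k : ℝ}

theorem hasDerivAt_quadratic_sub_mul_exp (z : ℝ) :
    HasDerivAt (fun s ↦ c₁ + c₂ * s + c₃ * s ^ 2 - (s - k) * exp (h * s))
      (c₂ + 2 * c₃ * z - (1 + h * (z - k)) * exp (h * z)) z := by
  have hexp : HasDerivAt (fun s ↦ exp (h * s)) (exp (h * z) * h) z :=
    (hasDerivAt_exp (h * z)).comp z ((hasDerivAt_id' z).const_mul h |>.congr_deriv (mul_one h))
  have hquad : HasDerivAt (fun s ↦ c₁ + c₂ * s + c₃ * s ^ 2) (c₂ + 2 * c₃ * z) z :=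
    (((hasDerivAt_id' z).const_mul c₂).const_add c₁).add ((hasDerivAt_pow 2 z).const_mul c₃)
      |>.congr_deriv (by ring)
  exact (hquad.sub (((hasDerivAt_id' z).sub_const k).mul hexp)).congr_deriv (by ring)

theorem tangent_of_isLocalMin_of_eq_zero {z : ℝ}
    (hmin : IsLocalMin (fun s ↦ c₁ + c₂ * s + c₃ * s ^ 2 - (s - k) * exp (h * s)) z)
    (hz : c₁ + c₂ * z + c₃ * z ^ 2 - (z - k) * exp (h * z) = 0) :
    c₁ + c₂ * z + c₃ * z ^ 2 = (z - k) * exp (h * z) ∧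
      c₂ + 2 * c₃ * z = (1 + h * (z - k)) * exp (h * z) := by
  have := hmin.hasDerivAt_eq_zero (hasDerivAt_quadratic_sub_mul_exp z)
  constructor <;> linarith

theorem neg_of_tangent_at_two_points (hh : 0 < h) {u v : ℝ} (huv : u < v)
    (hu : c₁ + c₂ * u + c₃ * u ^ 2 = (u - k) * exp (h * u))
    (hu' : c₂ + 2 * c₃ * u = (1 + h * (u - k)) * exp (h * u))
    (hv : c₁ + c₂ * v + c₃ * v ^ 2 = (v - k) * exp (h * v))
    (hv' : c₂ + 2 * c₃ * v = (1 + h * (v - k)) * exp (h * v)) :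
    c₃ < 0 := by
  set A := exp (h * u)
  set B := exp (h * v)
  have hlt : h * u < h * v := mul_lt_mul_of_pos_left huv hh
  have htrap : 2 * (B - A) < (h * v - h * u) * (A + B) := two_mul_exp_sub_exp_lt hlt
  have hmid := sub_mul_exp_midpoint_lt_exp_sub_exp hlt
  have hAB : exp ((h * u + h * v) / 2) ^ 2 = A * B := by
    rw [← exp_nat_mul, ← exp_add]; ring_nf
  have hsq : (h * v - h * u) ^ 2 * (A * B) < (B - A) ^ 2 := by
    rw [← hAB, ← mul_pow]
    exact pow_lt_pow_left₀ hmid (by nlinarith [exp_pos ((h * u + h * v) / 2)]) two_ne_zero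
  have key : c₃ * ((v - u) * ((h * v - h * u) * (A + B) - 2 * (B - A)))
      = (h * v - h * u) ^ 2 * (A * B) - (B - A) ^ 2 := by
    linear_combination ((h * (v - u) * (A + B) - 2 * (B - A)) / 2) * (hv' - hu')
      + (h * (B - A)) * (hv - hu) - (h * (B - A) * (v - u) / 2) * (hu' + hv')
  refine neg_of_mul_neg_left (key ▸ sub_neg.mpr hsq) ?_
  exact mul_nonneg (sub_nonneg.mpr huv.le) (sub_nonneg.mpr htrap.le)

end QuadraticMinusExp

theorem eq_of_quadratic_eq_zero_of_nonneg_midpoint {a b c x y : ℝ} (hc : 0 < c)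
    (hx : a + b * x + c * x ^ 2 = 0) (hy : a + b * y + c * y ^ 2 = 0)
    (hmid : 0 ≤ a + b * ((x + y) / 2) + c * ((x + y) / 2) ^ 2) : x = y := by
  have hsq : c * (x - y) ^ 2 ≤ 0 := by linarith
  have : (x - y) ^ 2 = 0 := le_antisymm (nonpos_of_mul_nonpos_right hsq hc) (sq_nonneg _)
  exact sub_eq_zero.mp (pow_eq_zero_iff two_ne_zero |>.mp this)

theorem stmt_18 (h c₁ c₂ c₃ k w : ℝ) (hh : 0 < h) (hc₃ : 0 < c₃)
    (d : ℝ → ℝ)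
    (hd : ∀ s : ℝ, d s = c₁ + c₂ * s + c₃ * s ^ 2 -
      (s - k) * Real.exp (h * min s w))
    (hnn : ∀ s : ℝ, 0 ≤ d s) :
    (∀ s₁ s₂ : ℝ, s₁ < w → s₂ < w → d s₁ = 0 → d s₂ = 0 → s₁ = s₂) ∧
    (∀ s₁ s₂ : ℝ, w ≤ s₁ → w ≤ s₂ → d s₁ = 0 → d s₂ = 0 → s₁ = s₂) ∧
    ({s : ℝ | d s = 0}).encard ≤ 2 := by
  have hdF (s : ℝ) (hs : s < w) :
      d s = c₁ + c₂ * s + c₃ * s ^ 2 - (s - k) * exp (h * s) := by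
    rw [hd, min_eq_left hs.le]
  have htangent (z : ℝ) (hzw : z < w) (hz : d z = 0) :=
    tangent_of_isLocalMin_of_eq_zero
      (Filter.eventually_of_mem (Iio_mem_nhds hzw) fun s hs ↦ by
        simp only [← hdF s hs, ← hdF z hzw, hz, hnn s]) ((hdF z hzw).symm.trans hz)
  have hbelow (s₁ s₂ : ℝ) (h₁ : s₁ < w) (h₂ : s₂ < w) (hz₁ : d s₁ = 0) (hz₂ : d s₂ = 0) :
      s₁ = s₂ := by
    by_contra hne
    wlog hlt : s₁ < s₂ generalizing s₁ s₂
    · exact this s₂ s₁ h₂ h₁ hz₂ hz₁ (Ne.symm hne) ((Ne.symm hne).lt_of_le (not_lt.mp hlt))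
    obtain ⟨hval₁, hslope₁⟩ := htangent s₁ h₁ hz₁
    obtain ⟨hval₂, hslope₂⟩ := htangent s₂ h₂ hz₂
    exact hc₃.not_gt (neg_of_tangent_at_two_points hh hlt hval₁ hslope₁ hval₂ hslope₂)
  have habove (s₁ s₂ : ℝ) (h₁ : w ≤ s₁) (h₂ : w ≤ s₂) (hz₁ : d s₁ = 0) (hz₂ : d s₂ = 0) :
      s₁ = s₂ := by
    have hd' : ∀ s, w ≤ s → d s = c₁ + k * exp (h * w) + (c₂ - exp (h * w)) * s + c₃ * s ^ 2 :=
      fun s hs ↦ by rw [hd, min_eq_right hs]; ring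
    refine eq_of_quadratic_eq_zero_of_nonneg_midpoint hc₃ ((hd' s₁ h₁).symm.trans hz₁)
      ((hd' s₂ h₂).symm.trans hz₂) ?_
    rw [← hd' _ (by linarith)]
    exact hnn _
  refine ⟨hbelow, habove, ?_⟩
  rw [← Set.encard_sdiff_add_encard_inter _ (Iio w), ← one_add_one_eq_two]
  gcongr <;> refine Set.encard_le_one_iff.mpr fun a b ha hb ↦ ?_
  · exact habove a b (not_lt.mp ha.2) (not_lt.mp hb.2) ha.1 hb.1
  · exact hbelow a b ha.2 hb.2 ha.1 hb.1
end

section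
/- Fix h > 0 and w ∈ {−1, 0}, and real σ > 0. Define r₂(ε) := 1 − 2ε e^{(ε+w)h}(1+εh)/(ε³h² + (h²σ² + 2)ε + 2hσ² + 4ε²h) for ε > |w|. Then r₂ is strictly decreasing on (|w|, ∞), with r₂(ε) → −∞ as ε → ∞ and lim_{ε→|w|⁺} r₂(ε) > 0. -/
/-!
Write `r₂ = 1 - N / D`. The quotient rule gives `N' D - N D' = 2 e^{(ε+w)h} P(ε)` for a polynomial
`P` whose coefficients are all positive, so `N / D` is strictly increasing on `[0, ∞)`. Since `D` is
cubic while `N` grows like `ε² e^{εh}`, `N / D → ∞`. At `ε = |w| = -w` the exponential factor is `1`,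
and `D(ε) - 2ε(1 + εh) = ε³h² + h²σ²ε + 2hσ² + 2ε²h > 0`, which makes the right-hand limit positive.
-/

open Real Filter Set

noncomputable def r₂Num (h w ε : ℝ) : ℝ := 2 * ε * exp ((ε + w) * h) * (1 + ε * h)

def r₂Den (h σ ε : ℝ) : ℝ :=
  ε ^ 3 * h ^ 2 + (h ^ 2 * σ ^ 2 + 2) * ε + 2 * h * σ ^ 2 + 4 * ε ^ 2 * h

section

variable {h σ w ε : ℝ}

lemma r₂Den_pos (hh : 0 < h) (hσ : σ ≠ 0) (hε : 0 ≤ ε) : 0 < r₂Den h σ ε := by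
  unfold r₂Den
  positivity

lemma r₂Den_le_pow_three_mul (hh : 0 ≤ h) (hε : 1 ≤ ε) :
    r₂Den h σ ε ≤ ε ^ 3 * r₂Den h σ 1 := by
  have hε1 : ε ≤ ε ^ 3 := le_self_pow₀ hε (by norm_num)
  have hε2 : ε ^ 2 ≤ ε ^ 3 := pow_le_pow_right₀ hε (by norm_num)
  have hε0 : 1 ≤ ε ^ 3 := one_le_pow₀ hε
  unfold r₂Den
  linarith [mul_le_mul_of_nonneg_left hε1 (by positivity : 0 ≤ h ^ 2 * σ ^ 2 + 2),
    mul_le_mul_of_nonneg_left hε2 (by positivity : 0 ≤ 4 * h),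
    mul_le_mul_of_nonneg_left hε0 (by positivity : 0 ≤ 2 * h * σ ^ 2)]

lemma r₂Num_lt_r₂Den_of_add_eq_zero (hh : 0 < h) (hσ : σ ≠ 0) (hε : 0 ≤ ε) (hεw : ε + w = 0) :
    r₂Num h w ε < r₂Den h σ ε := by
  have gap : 0 < ε ^ 3 * h ^ 2 + h ^ 2 * σ ^ 2 * ε + 2 * h * σ ^ 2 + 2 * ε ^ 2 * h := by
    positivity
  unfold r₂Num r₂Den
  rw [hεw, zero_mul, exp_zero]
  linarith

lemma hasDerivAt_r₂Num (h w ε : ℝ) :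
    HasDerivAt (r₂Num h w) (2 * exp ((ε + w) * h) * (1 + 3 * ε * h + ε ^ 2 * h ^ 2)) ε := by
  have hexp : HasDerivAt (fun x => exp ((x + w) * h)) (exp ((ε + w) * h) * (1 * h)) ε :=
    (((hasDerivAt_id ε).add_const w).mul_const h).exp
  have hlin : HasDerivAt (fun x => 1 + x * h) (1 * h) ε :=
    ((hasDerivAt_id ε).mul_const h).const_add 1
  refine ((((hasDerivAt_id ε).const_mul 2).mul hexp).mul hlin).congr_deriv ?_
  simp only [Pi.mul_apply, id]
  ring

lemma hasDerivAt_r₂Den (h σ ε : ℝ) :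
    HasDerivAt (r₂Den h σ) (3 * ε ^ 2 * h ^ 2 + (h ^ 2 * σ ^ 2 + 2) + 8 * ε * h) ε := by
  have hcube : HasDerivAt (fun x => x ^ 3 * h ^ 2) (3 * ε ^ 2 * h ^ 2) ε := by
    simpa using (hasDerivAt_pow 3 ε).mul_const (h ^ 2)
  have hsq : HasDerivAt (fun x => 4 * x ^ 2 * h) (8 * ε * h) ε := by
    refine (((hasDerivAt_pow 2 ε).const_mul 4).mul_const h).congr_deriv ?_
    simp only [Nat.cast_ofNat, pow_one, Nat.add_one_sub_one]
    ring
  unfold r₂Den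
  refine (((hcube.add ((hasDerivAt_id ε).const_mul _)).add_const _).add hsq).congr_deriv ?_
  ring

lemma strictMonoOn_r₂Num_div_r₂Den (hh : 0 < h) (hσ : σ ≠ 0) :
    StrictMonoOn (fun ε => r₂Num h w ε / r₂Den h σ ε) (Ici 0) := by
  have hderiv : ∀ ε, 0 ≤ ε → HasDerivAt (fun ε => r₂Num h w ε / r₂Den h σ ε)
      ((2 * exp ((ε + w) * h) * (1 + 3 * ε * h + ε ^ 2 * h ^ 2) * r₂Den h σ ε -
        r₂Num h w ε * (3 * ε ^ 2 * h ^ 2 + (h ^ 2 * σ ^ 2 + 2) + 8 * ε * h)) /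
        r₂Den h σ ε ^ 2) ε := fun ε hε =>
    (hasDerivAt_r₂Num h w ε).div (hasDerivAt_r₂Den h σ ε) (r₂Den_pos hh hσ hε).ne'
  refine strictMonoOn_of_deriv_pos (convex_Ici 0)
    (fun ε hε => (hderiv ε hε).continuousAt.continuousWithinAt) fun ε hε => ?_
  rw [interior_Ici, mem_Ioi] at hε
  rw [(hderiv ε hε.le).deriv]
  have quotient_numerator :
      2 * exp ((ε + w) * h) * (1 + 3 * ε * h + ε ^ 2 * h ^ 2) * r₂Den h σ ε -
        r₂Num h w ε * (3 * ε ^ 2 * h ^ 2 + (h ^ 2 * σ ^ 2 + 2) + 8 * ε * h) =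
      2 * exp ((ε + w) * h) * (2 * h * σ ^ 2 + 6 * ε * h ^ 2 * σ ^ 2 + 4 * ε ^ 2 * h ^ 3 * σ ^ 2 +
        ε ^ 3 * (4 * h ^ 2 + h ^ 4 * σ ^ 2) + 4 * ε ^ 4 * h ^ 3 + ε ^ 5 * h ^ 4) := by
    unfold r₂Num r₂Den
    ring
  rw [quotient_numerator]
  exact div_pos (by positivity) (pow_pos (r₂Den_pos hh hσ hε.le) 2)

lemma tendsto_r₂Num_div_r₂Den_atTop (hh : 0 < h) :
    Tendsto (fun ε => r₂Num h w ε / r₂Den h σ ε) atTop atTop := by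
  set K := r₂Den h σ 1
  have hK : 0 < K := by unfold K r₂Den; positivity
  have hlower : Tendsto (fun ε => 2 * h * exp (w * h) / K * (exp (h * ε) / ε ^ (1 : ℝ)))
      atTop atTop :=
    (tendsto_exp_mul_div_rpow_atTop 1 h hh).const_mul_atTop (by positivity)
  refine tendsto_atTop_mono' _ ?_ hlower
  filter_upwards [eventually_ge_atTop 1] with ε hε
  have hε0 : 0 < ε := one_pos.trans_le hε
  have hnum : 2 * h * exp (w * h) * ε ^ 2 * exp (h * ε) ≤ r₂Num h w ε := by
    have hsplit : exp ((ε + w) * h) = exp (h * ε) * exp (w * h) := by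
      rw [← exp_add]; ring_nf
    unfold r₂Num
    rw [hsplit]
    nlinarith [(by positivity : 0 ≤ 2 * ε * (exp (h * ε) * exp (w * h)))]
  calc 2 * h * exp (w * h) / K * (exp (h * ε) / ε ^ (1 : ℝ))
      = 2 * h * exp (w * h) * ε ^ 2 * exp (h * ε) / (ε ^ 3 * K) := by
        rw [rpow_one]; field_simp
    _ ≤ r₂Num h w ε / r₂Den h σ ε :=
        div_le_div₀ ((by positivity : (0 : ℝ) ≤ _).trans hnum) hnum (by unfold r₂Den; positivity)
          (r₂Den_le_pow_three_mul hh.le hε)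

end

theorem stmt_19 (h σ w : ℝ) (hh : 0 < h) (hσ : 0 < σ)
    (hw : w = -1 ∨ w = 0) (r₂ : ℝ → ℝ)
    (hr₂ : ∀ ε : ℝ, r₂ ε = 1 -
      2 * ε * Real.exp ((ε + w) * h) * (1 + ε * h) /
        (ε ^ 3 * h ^ 2 + (h ^ 2 * σ ^ 2 + 2) * ε + 2 * h * σ ^ 2 +
          4 * ε ^ 2 * h)) :
    StrictAntiOn r₂ (Set.Ioi |w|) ∧
    Filter.Tendsto r₂ Filter.atTop Filter.atBot ∧
    ∃ l : ℝ, 0 < l ∧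
      Filter.Tendsto r₂ (nhdsWithin |w| (Set.Ioi |w|)) (nhds l) := by
  have hr : r₂ = fun ε => 1 - r₂Num h w ε / r₂Den h σ ε := funext hr₂
  subst hr
  have hw0 : w ≤ 0 := by rcases hw with rfl | rfl <;> norm_num
  have hmono := strictMonoOn_r₂Num_div_r₂Den (w := w) hh hσ.ne'
  refine ⟨fun x hx y hy hxy => ?_, ?_, ?_⟩
  · have hIoi : Ioi |w| ⊆ Ici 0 := Ioi_subset_Ici (abs_nonneg w)
    exact sub_lt_sub_left (hmono (hIoi hx) (hIoi hy) hxy) 1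
  · simpa only [sub_eq_add_neg, Function.comp_def] using tendsto_atBot_add_const_left _ 1
      (tendsto_neg_atTop_atBot.comp (tendsto_r₂Num_div_r₂Den_atTop (σ := σ) (w := w) hh))
  · have hden : 0 < r₂Den h σ |w| := r₂Den_pos hh hσ.ne' (abs_nonneg w)
    have hcont : ContinuousAt (fun ε => 1 - r₂Num h w ε / r₂Den h σ ε) |w| :=
      continuousAt_const.sub ((hasDerivAt_r₂Num h w |w|).continuousAt.div
        (hasDerivAt_r₂Den h σ |w|).continuousAt hden.ne')
    refine ⟨_, ?_, hcont.tendsto.mono_left nhdsWithin_le_nhds⟩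
    have hlt := r₂Num_lt_r₂Den_of_add_eq_zero hh hσ.ne' (abs_nonneg w)
      (by rw [abs_of_nonpos hw0]; ring)
    exact sub_pos.2 ((div_lt_one hden).2 hlt)
end
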